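/- arXiv:1707.05190 — 5 statements merged into one kernel-verified Lean document; each statement's English description precedes it below -/
import Mathlib

section
/- Let (η, v) be a solution of the Lagrangian delayed Cucker–Smale system with η ∈ C¹ in time and v continuous, and set R_V := max_{s∈[−τ,0]} max_{x∈cl(Ω₀)} |v_s(x)| < ∞. Then |v_t(x)| ≤ R_V for all t ≥ 0 and all x ∈ cl(Ω₀). -/
/-!
Write `u_x(t) := v_t(x)`. For `t > 0` the equation reads `u_x' = A_x(t) - u_x`, where `A_x(t)` is a
weighted average of the delayed velocities `v_{t-τ}(y)`, the weights `ψ(…) ρ₀(y)` being nonnegative.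
Hence `‖A_x(t)‖` never exceeds a bound on the velocities at time `t - τ`, and the relaxation
`(eᵗ u_x)' = eᵗ A_x` keeps `‖u_x‖` below that bound. Marching forward in steps of length `τ` from the
initial interval `[-τ, 0]` propagates `R_V` to all times, and continuity extends it from `Ω₀` to its
closure.
-/

open MeasureTheory Real Set Filter

noncomputable section

/-- Points of `ℝ^d`. -/
abbrev Euc (d : ℕ) := EuclideanSpace ℝ (Fin d)

/-- `(η, v)` is a solution of the Lagrangian delayed Cucker–Smale system on `Ω₀`
with delay `τ`, mass density `ρ₀` and influence function `ψ`:
`η 0 x = x`, `∂ₜ η t x = v t x` for `t ≥ -τ`, and for `t > 0`, `x ∈ Ω₀`,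
`∂ₜ v t x = (∫_{Ω₀} ψ(η_t(x) - η_{t-τ}(y)) ρ₀(y) v_{t-τ}(y) dy) /
            (∫_{Ω₀} ψ(η_t(x) - η_{t-τ}(y)) ρ₀(y) dy) - v t x`. -/
def IsCSSol (d : ℕ) (τ : ℝ) (Ω₀ : Set (Euc d)) (ρ₀ : Euc d → ℝ) (ψ : Euc d → ℝ)
    (η v : ℝ → Euc d → Euc d) : Prop :=
  (∀ x ∈ closure Ω₀, η 0 x = x) ∧
  (∀ x ∈ closure Ω₀, ∀ t : ℝ, -τ ≤ t →
    HasDerivWithinAt (fun s => η s x) (v t x) (Set.Ici (-τ)) t) ∧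
  (∀ x ∈ Ω₀, ∀ t : ℝ, 0 < t →
    HasDerivAt (fun s => v s x)
      (((∫ y in Ω₀, ψ (η t x - η (t - τ) y) * ρ₀ y)⁻¹ •
        ∫ y in Ω₀, (ψ (η t x - η (t - τ) y) * ρ₀ y) • v (t - τ) y) - v t x) t)

/-- The influence function `ψ` is Lipschitz, radially symmetric `ψ(x) = ψt(|x|)` with
`ψt` positive and nonincreasing on `[0,∞)` and `ψt 0 = 1`. -/
def GoodInfluence (d : ℕ) (ψ : Euc d → ℝ) (ψt : ℝ → ℝ) : Prop :=
  (∀ x, ψ x = ψt ‖x‖) ∧ (∀ r : ℝ, 0 ≤ r → 0 < ψt r) ∧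
    AntitoneOn ψt (Set.Ici 0) ∧ ψt 0 = 1 ∧ ∃ K : NNReal, LipschitzWith K ψ

/-- `ρ₀` is a nonnegative measurable probability density supported in `Ω₀`. -/
def GoodDensity (d : ℕ) (Ω₀ : Set (Euc d)) (ρ₀ : Euc d → ℝ) : Prop :=
  Measurable ρ₀ ∧ (∀ y, 0 ≤ ρ₀ y) ∧ (∀ y, y ∉ Ω₀ → ρ₀ y = 0) ∧
    IntegrableOn ρ₀ Ω₀ ∧ ∫ y in Ω₀, ρ₀ y = 1

/-- `R_V := max_{s ∈ [-τ,0]} max_{x ∈ cl Ω₀} |v_s(x)|` (as a supremum). -/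
def velBound (d : ℕ) (τ : ℝ) (Ω₀ : Set (Euc d)) (v : ℝ → Euc d → Euc d) : ℝ :=
  sSup {r : ℝ | ∃ s ∈ Set.Icc (-τ) 0, ∃ x ∈ closure Ω₀, r = ‖v s x‖}

/-- The diameter `max_{x,y ∈ cl Ω₀} |f(x) - f(y)|` (as a supremum); applied to `η t`
it gives `d_X(t)` and applied to `v t` it gives `d_V(t)`. -/
def diamF (d : ℕ) (Ω₀ : Set (Euc d)) (f : Euc d → Euc d) : ℝ :=
  sSup {r : ℝ | ∃ x ∈ closure Ω₀, ∃ y ∈ closure Ω₀, r = ‖f x - f y‖}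

section Averaging

variable {α E : Type*} [MeasurableSpace α] [NormedAddCommGroup E] [NormedSpace ℝ E]

/-- When `∫ w = 0` the left-hand side is `0` (as `0⁻¹ = 0`), hence the assumption `0 ≤ R`. -/
theorem norm_inv_integral_smul_integral_smul_le {μ : Measure α} {w : α → ℝ} {f : α → E} {R : ℝ}
    (hR : 0 ≤ R) (hw : 0 ≤ᵐ[μ] w) (hf : ∀ᵐ x ∂μ, ‖f x‖ ≤ R) :
    ‖(∫ x, w x ∂μ)⁻¹ • ∫ x, w x • f x ∂μ‖ ≤ R := by
  rcases (integral_nonneg_of_ae hw).eq_or_lt with hzero | hpos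
  · simpa [← hzero] using hR
  have hint : Integrable w μ := by
    by_contra h
    exact hpos.ne' (integral_undef h)
  have hnum : ‖∫ x, w x • f x ∂μ‖ ≤ (∫ x, w x ∂μ) * R := by
    rw [← integral_mul_const]
    refine norm_integral_le_of_norm_le (hint.mul_const R) ?_
    filter_upwards [hw, hf] with x hwx hfx
    rw [norm_smul, Real.norm_of_nonneg hwx]
    exact mul_le_mul_of_nonneg_left hfx hwx
  rw [norm_smul, norm_inv, Real.norm_of_nonneg hpos.le, inv_mul_le_iff₀ hpos]
  exact hnum

end Averaging

section Comparison

variable {E : Type*} [NormedAddCommGroup E] [NormedSpace ℝ E]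

theorem norm_sub_le_of_norm_hasDerivAt_le_Ioo {f f' : ℝ → E} {B B' : ℝ → ℝ} {a b : ℝ}
    (hab : a ≤ b) (hf : ContinuousOn f (Icc a b)) (hf' : ∀ t ∈ Ioo a b, HasDerivAt f (f' t) t)
    (hB : ∀ t, HasDerivAt B (B' t) t) (bound : ∀ t ∈ Ioo a b, ‖f' t‖ ≤ B' t) :
    ‖f b - f a‖ ≤ B b - B a := by
  rcases hab.eq_or_lt with rfl | hab
  · simp
  have hinterior : ∀ s ∈ Ioo a b, ‖f b - f s‖ ≤ B b - B s := by
    intro s hs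
    have hsub : Icc s b ⊆ Icc a b := Icc_subset_Icc hs.1.le le_rfl
    refine image_norm_le_of_norm_deriv_right_le_deriv_boundary (f := fun t => f t - f s)
      (B := fun t => B t - B s) ((hf.mono hsub).sub continuousOn_const)
      (fun t ht => ((hf' t ⟨hs.1.trans_le ht.1, ht.2⟩).sub_const _).hasDerivWithinAt)
      (by simp) (fun t => (hB t).sub_const _)
      (fun t ht => bound t ⟨hs.1.trans_le ht.1, ht.2⟩) (right_mem_Icc.2 hs.2.le)
  have hcl : closure (Ioo a b) = Icc a b := closure_Ioo hab.ne
  refine le_on_closure hinterior ?_ ?_ (hcl ▸ left_mem_Icc.2 hab.le)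
  · exact hcl ▸ (continuousOn_const.sub hf).norm
  · exact hcl ▸ (continuousOn_const.sub (fun t _ => (hB t).continuousAt.continuousWithinAt))

/-- Compare `eᵗ • f t`, whose derivative is `eᵗ • g t`, with `R eᵗ`. -/
theorem norm_le_of_hasDerivAt_sub_self {f g : ℝ → E} {a b R : ℝ} (hab : a ≤ b)
    (hf : ContinuousOn f (Icc a b)) (hf' : ∀ t ∈ Ioo a b, HasDerivAt f (g t - f t) t)
    (hg : ∀ t ∈ Ioo a b, ‖g t‖ ≤ R) (ha : ‖f a‖ ≤ R) : ‖f b‖ ≤ R := by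
  have hF' : ∀ t ∈ Ioo a b, HasDerivAt (fun s => exp s • f s) (exp t • g t) t := fun t ht =>
    ((hasDerivAt_exp t).smul (hf' t ht)).congr_deriv (by rw [smul_sub, sub_add_cancel])
  have hfence := norm_sub_le_of_norm_hasDerivAt_le_Ioo (f := fun s => exp s • f s) hab
    (continuous_exp.continuousOn.smul hf) hF' (fun t => (hasDerivAt_exp t).const_mul R)
    (fun t ht => by
      rw [norm_smul, Real.norm_of_nonneg (exp_pos t).le, mul_comm]
      exact mul_le_mul_of_nonneg_right (hg t ht) (exp_pos t).le)
  have hnorm : ∀ t, ‖exp t • f t‖ = exp t * ‖f t‖ := fun t => by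
    rw [norm_smul, Real.norm_of_nonneg (exp_pos t).le]
  have htri := norm_le_norm_add_norm_sub' (exp b • f b) (exp a • f a)
  rw [hnorm, hnorm] at htri
  have hstart := mul_le_mul_of_nonneg_left ha (exp_pos a).le
  refine le_of_mul_le_mul_left ?_ (exp_pos b)
  linarith

end Comparison

theorem forall_of_delay_induction {τ : ℝ} (hτ : 0 < τ) {Q : ℝ → Prop}
    (h0 : ∀ t ∈ Icc (-τ) 0, Q t)
    (step : ∀ a, 0 ≤ a → (∀ t ∈ Icc (-τ) a, Q t) → ∀ t ∈ Icc a (a + τ), Q t) :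
    ∀ t, -τ ≤ t → Q t := by
  have hn : ∀ n : ℕ, ∀ t ∈ Icc (-τ) (n * τ), Q t := by
    intro n
    induction n with
    | zero => simpa using h0
    | succ n ih =>
      intro t ht
      rcases le_or_gt t (n * τ) with h | h
      · exact ih t ⟨ht.1, h⟩
      · exact step (n * τ) (by positivity) ih t ⟨h.le, by push_cast at ht; linarith [ht.2]⟩
  intro t ht
  obtain ⟨n, hn'⟩ := exists_nat_ge (t / τ)
  exact hn n t ⟨ht, (div_le_iff₀ hτ).1 hn'⟩

theorem stmt_3_general {d : ℕ} (τ : ℝ) (hτ : 0 < τ)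
    (Ω₀ : Set (Euc d)) (hΩo : IsOpen Ω₀)
    (ρ₀ : Euc d → ℝ) (hρ : GoodDensity d Ω₀ ρ₀)
    (ψ : Euc d → ℝ) (ψt : ℝ → ℝ) (hψ : GoodInfluence d ψ ψt)
    (η v : ℝ → Euc d → Euc d)
    (hsol : IsCSSol d τ Ω₀ ρ₀ ψ η v)
    (hv_cont : ContinuousOn (fun p : ℝ × Euc d => v p.1 p.2)
      (Set.Ici (-τ) ×ˢ closure Ω₀))
    (hRV_fin : BddAbove {r : ℝ | ∃ s ∈ Set.Icc (-τ) 0, ∃ x ∈ closure Ω₀, r = ‖v s x‖}) :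
    ∀ t, 0 ≤ t → ∀ x ∈ closure Ω₀, ‖v t x‖ ≤ velBound d τ Ω₀ v := by
  obtain ⟨-, -, hvd⟩ := hsol
  obtain ⟨hrad, hpos, -⟩ := hψ
  have hψ0 : ∀ z, 0 ≤ ψ z := fun z => hrad z ▸ (hpos _ (norm_nonneg z)).le
  set R := velBound d τ Ω₀ v
  have hR : 0 ≤ R := Real.sSup_nonneg (by rintro _ ⟨-, -, -, -, rfl⟩; exact norm_nonneg _)
  have hspace : ∀ t, -τ ≤ t → ContinuousOn (v t) (closure Ω₀) := fun t ht =>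
    hv_cont.comp (continuous_const.prodMk continuous_id).continuousOn fun _ hy => ⟨ht, hy⟩
  have htime : ∀ x ∈ closure Ω₀, ContinuousOn (fun s => v s x) (Ici (-τ)) := fun x hx =>
    hv_cont.comp (continuous_id.prodMk continuous_const).continuousOn fun _ hs => ⟨hs, hx⟩
  refine fun t ht => forall_of_delay_induction hτ (Q := fun s => ∀ x ∈ closure Ω₀, ‖v s x‖ ≤ R)
    (fun s hs x hx => le_csSup hRV_fin ⟨s, hs, x, hx, rfl⟩) ?_ t (by linarith)
  intro a ha hprev t ht
  refine le_on_closure (fun x hx => ?_) (hspace t (by linarith [ht.1])).norm continuousOn_const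
  refine norm_le_of_hasDerivAt_sub_self ht.1
    ((htime x (subset_closure hx)).mono fun s hs => mem_Ici.2 (by linarith [hs.1]))
    (fun u hu => hvd x hx u (ha.trans_lt hu.1))
    (fun u hu => norm_inv_integral_smul_integral_smul_le hR
      (Eventually.of_forall fun y => mul_nonneg (hψ0 _) (hρ.2.1 y)) ?_)
    (hprev a ⟨by linarith, le_rfl⟩ x (subset_closure hx))
  filter_upwards [ae_restrict_mem hΩo.measurableSet] with y hy
  exact hprev (u - τ) ⟨by linarith [hu.1], by linarith [hu.2, ht.2]⟩ y (subset_closure hy)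

/-- **Uniform velocity bound (Lemma 4.1).** For a solution of the Lagrangian delayed
Cucker–Smale system with `R_V := max_{s∈[-τ,0]} max_{x∈cl Ω₀} |v_s(x)| < ∞`,
one has `|v_t(x)| ≤ R_V` for all `t ≥ 0` and `x ∈ cl Ω₀`. -/
theorem stmt_3 {d : ℕ} (τ : ℝ) (hτ : 0 < τ)
    (Ω₀ : Set (Euc d)) (hΩo : IsOpen Ω₀) (hΩne : Ω₀.Nonempty)
    (hΩb : Bornology.IsBounded Ω₀)
    (ρ₀ : Euc d → ℝ) (hρ : GoodDensity d Ω₀ ρ₀)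
    (ψ : Euc d → ℝ) (ψt : ℝ → ℝ) (hψ : GoodInfluence d ψ ψt)
    (η v : ℝ → Euc d → Euc d)
    (hsol : IsCSSol d τ Ω₀ ρ₀ ψ η v)
    (hη_cont : ContinuousOn (fun p : ℝ × Euc d => η p.1 p.2)
      (Set.Ici (-τ) ×ˢ closure Ω₀))
    (hv_cont : ContinuousOn (fun p : ℝ × Euc d => v p.1 p.2)
      (Set.Ici (-τ) ×ˢ closure Ω₀))
    (hRV_fin : BddAbove {r : ℝ | ∃ s ∈ Set.Icc (-τ) 0, ∃ x ∈ closure Ω₀, r = ‖v s x‖}) :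
    ∀ t, 0 ≤ t → ∀ x ∈ closure Ω₀, ‖v t x‖ ≤ velBound d τ Ω₀ v :=
  stmt_3_general τ hτ Ω₀ hΩo ρ₀ hρ ψ ψt hψ η v hsol hv_cont hRV_fin
end
end

section
/- Let (η, v) be a solution of the Lagrangian delayed Cucker–Smale system and define, for t ≥ 0, X(t) := d_X(0) + ∫₀ᵗ d_V(s) ds and V(t) := d_V(0)·e^{−t} + ∫₀ᵗ [1 − ψ̃(X(s−τ) + R_V·τ)] · d_V(s−τ) · e^{s−t} ds, while X(t) := d_X(t) and V(t) := d_V(t) for t ∈ [−τ,0]. Then for all t > 0: (i) X'(t) = d_V(t); (ii) V'(t) ≤ −V(t) + [1 − ψ̃(X(t−τ) + R_V·τ)]·V(t−τ); and moreover (iii) d_V(t) ≤ V(t) for all t ≥ −τ. -/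
open MeasureTheory Real Set Filter

noncomputable section

/-!
Along every trajectory `e^t v_t(x)` has derivative `e^t` times a weighted mean of the delayed
velocities, so the velocities never leave the ball of radius `R_V` and each particle moves by at
most `R_V τ` during one delay. Hence all influence weights at time `t` are at least
`m(t) = ψ̃(X(t - τ) + R_V τ)`, and two such normalized averages share the common part `m(t) ρ₀`:
they differ by at most `(1 - m(t)) d_V(t - τ)`. Integrating
`d/dt [e^t (v_t(x) - v_t(y))]` gives `d_V(t) ≤ V(t)`, and differentiating the Duhamel form of
`X` and `V` gives (i) and (ii).
-/

section Calculus

variable {E : Type*} [NormedAddCommGroup E] [NormedSpace ℝ E]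

theorem hasDerivAt_integral_of_continuousOn_Ici [CompleteSpace E] {g : ℝ → E} {a t : ℝ}
    (hg : ContinuousOn g (Ici a)) (ht : a < t) :
    HasDerivAt (fun u => ∫ s in a..u, g s) (g t) t :=
  intervalIntegral.integral_hasDerivAt_right
    ((hg.mono Icc_subset_Ici_self).intervalIntegrable_of_Icc ht.le)
    ((hg.mono Ioi_subset_Ici_self).stronglyMeasurableAtFilter isOpen_Ioi t ht)
    (hg.continuousAt (Ici_mem_nhds ht))

theorem continuousOn_primitive_Ici {g : ℝ → E} {a : ℝ}
    (hg : ContinuousOn g (Ici a)) : ContinuousOn (fun u => ∫ s in a..u, g s) (Ici a) := by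
  intro u hu
  have hint : IntegrableOn g (uIcc a (u + 1)) := by
    rw [uIcc_of_le (by linarith [mem_Ici.mp hu])]
    exact (hg.mono Icc_subset_Ici_self).integrableOn_Icc
  refine ((intervalIntegral.continuousOn_primitive_interval hint) u ?_).mono_of_mem_nhdsWithin ?_
  · rw [uIcc_of_le (by linarith [mem_Ici.mp hu])]; exact ⟨hu, by linarith⟩
  · rw [uIcc_of_le (by linarith [mem_Ici.mp hu])]
    exact mem_of_superset (inter_mem_nhdsWithin _ (Iio_mem_nhds (lt_add_one u)))
      fun s hs => ⟨hs.1, hs.2.le⟩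

theorem norm_sub_le_integral_of_norm_deriv_le [CompleteSpace E] {f f' : ℝ → E} {R : ℝ → ℝ}
    {a b : ℝ} (hab : a ≤ b)
    (hf : ContinuousOn f (Icc a b)) (hf' : ∀ s ∈ Ioo a b, HasDerivAt f (f' s) s)
    (hR : ContinuousOn R (Icc a b)) (hbound : ∀ s ∈ Ioo a b, ‖f' s‖ ≤ R s) :
    ‖f b - f a‖ ≤ ∫ s in a..b, R s := by
  have hae : ∀ᵐ s ∂volume.restrict (uIoc a b), s ∈ Ioo a b := by
    rw [uIoc_of_le hab, ← Measure.restrict_congr_set Ioo_ae_eq_Ioc]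
    exact ae_restrict_mem measurableSet_Ioo
  have hRi : IntervalIntegrable R volume a b := hR.intervalIntegrable_of_Icc hab
  -- `f'` is integrable because it agrees a.e. with the measurable function `deriv f`.
  have hf'i : IntervalIntegrable f' volume a b := by
    refine hRi.mono_fun' ((aestronglyMeasurable_deriv f _).congr ?_) ?_
    · filter_upwards [hae] with s hs using (hf' s hs).deriv
    · filter_upwards [hae] with s hs using hbound s hs
  rw [← intervalIntegral.integral_eq_sub_of_hasDerivAt_of_le hab hf hf' hf'i]
  refine intervalIntegral.norm_integral_le_of_norm_le hab ?_ hRi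
  rw [← ae_restrict_iff' measurableSet_Ioc, ← uIoc_of_le hab]
  filter_upwards [hae] with s hs using hbound s hs

theorem integral_mul_exp_sub (g : ℝ → ℝ) (a b t : ℝ) :
    ∫ s in a..b, g s * exp (s - t) = exp (-t) * ∫ s in a..b, exp s * g s := by
  rw [← intervalIntegral.integral_const_mul]
  congr 1 with s
  rw [sub_eq_add_neg, exp_add]
  ring

theorem hasDerivAt_exp_neg_mul_add_integral {g : ℝ → ℝ} (A : ℝ) {t : ℝ}
    (hg : ContinuousOn g (Ici 0)) (ht : 0 < t) :
    HasDerivAt (fun u => exp (-u) * (A + ∫ s in 0..u, exp s * g s))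
      (-(exp (-t) * (A + ∫ s in 0..t, exp s * g s)) + g t) t := by
  have h := (hasDerivAt_neg t).exp.mul
    ((hasDerivAt_integral_of_continuousOn_Ici (continuous_exp.continuousOn.mul hg) ht).const_add A)
  refine h.congr_deriv ?_
  have : exp (-t) * exp t = 1 := by rw [← exp_add, neg_add_cancel, exp_zero]
  simp only [Pi.mul_apply]
  linear_combination g t * this

end Calculus

theorem IsCompact.continuousOn_sSup_image {α β : Type*} [TopologicalSpace α] [TopologicalSpace β]
    {f : α → β → ℝ} {S : Set α} {K : Set β} (hK : IsCompact K)
    (hf : ContinuousOn (fun p : α × β => f p.1 p.2) (S ×ˢ K)) :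
    ContinuousOn (fun x => sSup (f x '' K)) S := by
  rw [continuousOn_iff_continuous_domRestrict]
  have hK' : IsCompact (univ : Set K) := isCompact_iff_isCompact_univ.1 hK
  have hfK : Continuous fun p : S × K => f p.1 p.2 :=
    hf.comp_continuous (f := fun p : S × K => ((p.1 : α), (p.2 : β))) (by fun_prop)
      fun p => ⟨p.1.2, p.2.2⟩
  convert hK'.continuous_sSup (f := fun (x : S) (k : K) => f x k) hfK using 2 with x
  show sSup (f x '' K) = _
  rw [image_eq_range, image_univ]

section WeightedAverage

variable {Y : Type*} [MeasurableSpace Y] {μ : Measure Y}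
  {E : Type*} [NormedAddCommGroup E] [NormedSpace ℝ E]

/-- The `q`-weighted average of `u`; since `0⁻¹ = 0` it is `0` when `∫ q = 0`. -/
def weightedAverage (μ : Measure Y) (q : Y → ℝ) (u : Y → E) : E :=
  (∫ y, q y ∂μ)⁻¹ • ∫ y, q y • u y ∂μ

theorem norm_weightedAverage_le {q : Y → ℝ} {u : Y → E} {C : ℝ} (hq : 0 ≤ᵐ[μ] q)
    (hu : ∀ᵐ y ∂μ, ‖u y‖ ≤ C) (hC : 0 ≤ C) : ‖weightedAverage μ q u‖ ≤ C := by
  by_cases hqi : Integrable q μ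
  · have hnum : ‖∫ y, q y • u y ∂μ‖ ≤ (∫ y, q y ∂μ) * C := by
      rw [← integral_mul_const]
      refine norm_integral_le_of_norm_le (hqi.mul_const C) ?_
      filter_upwards [hq, hu] with y hqy huy
      rw [norm_smul, Real.norm_of_nonneg hqy]
      exact mul_le_mul_of_nonneg_left huy hqy
    rw [weightedAverage, norm_smul, norm_inv, Real.norm_of_nonneg (integral_nonneg_of_ae hq)]
    calc (∫ y, q y ∂μ)⁻¹ * ‖∫ y, q y • u y ∂μ‖ ≤ (∫ y, q y ∂μ)⁻¹ * ((∫ y, q y ∂μ) * C) :=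
          mul_le_mul_of_nonneg_left hnum (inv_nonneg.2 (integral_nonneg_of_ae hq))
      _ ≤ C := by
          rcases eq_or_ne (∫ y, q y ∂μ) 0 with h | h
          · simp [h, hC]
          · rw [inv_mul_cancel_left₀ h]
  · simpa [weightedAverage, integral_undef hqi] using hC

theorem norm_integral_smul_sub_le [CompleteSpace E] {q : Y → ℝ} {u : Y → E} (c : E) {D : ℝ}
    (hq : 0 ≤ᵐ[μ] q) (hqi : Integrable q μ) (hqu : Integrable (fun y => q y • u y) μ)
    (hu : ∀ᵐ y ∂μ, ‖u y - c‖ ≤ D) :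
    ‖(∫ y, q y • u y ∂μ) - (∫ y, q y ∂μ) • c‖ ≤ (∫ y, q y ∂μ) * D := by
  rw [← integral_smul_const, ← integral_sub hqu (hqi.smul_const c), ← integral_mul_const]
  refine norm_integral_le_of_norm_le (hqi.mul_const D) ?_
  filter_upwards [hq, hu] with y hqy huy
  rw [← smul_sub, norm_smul, Real.norm_of_nonneg hqy]
  exact mul_le_mul_of_nonneg_left huy hqy

theorem norm_integral_smul_sub_integral_smul_le [CompleteSpace E] {q₁ q₂ : Y → ℝ} {u : Y → E}
    {D : ℝ}
    (hq₁ : 0 ≤ᵐ[μ] q₁) (hq₂ : 0 ≤ᵐ[μ] q₂) (hq₁i : Integrable q₁ μ) (hq₂i : Integrable q₂ μ)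
    (hq₁u : Integrable (fun y => q₁ y • u y) μ) (hq₂u : Integrable (fun y => q₂ y • u y) μ)
    (hmass : ∫ y, q₁ y ∂μ = ∫ y, q₂ y ∂μ) (hu : ∀ᵐ y ∂μ, ∀ᵐ z ∂μ, ‖u y - u z‖ ≤ D) :
    ‖(∫ y, q₁ y • u y ∂μ) - ∫ y, q₂ y • u y ∂μ‖ ≤ (∫ y, q₁ y ∂μ) * D := by
  rcases (integral_nonneg_of_ae hq₁).eq_or_lt with ha | ha
  · have hzero : ∀ q : Y → ℝ, 0 ≤ᵐ[μ] q → Integrable q μ → ∫ y, q y ∂μ = 0 →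
        ∫ y, q y • u y ∂μ = 0 := fun q hq hqi h => by
      refine integral_eq_zero_of_ae ?_
      filter_upwards [(integral_eq_zero_iff_of_nonneg_ae hq hqi).1 h] with y hy
      simp [hy]
    simp [hzero q₁ hq₁ hq₁i ha.symm, hzero q₂ hq₂ hq₂i (hmass ▸ ha.symm), ← ha]
  · -- `c` is the `q₂`-average of `u`; it lies within `D` of almost every value of `u`.
    set a := ∫ y, q₁ y ∂μ
    set c := a⁻¹ • ∫ y, q₂ y • u y ∂μ
    have hac : a • c = ∫ y, q₂ y • u y ∂μ := smul_inv_smul₀ ha.ne' _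
    have hc : ∀ᵐ y ∂μ, ‖u y - c‖ ≤ D := by
      filter_upwards [hu] with y hy
      have h := norm_integral_smul_sub_le (u y) hq₂ hq₂i hq₂u
        (hy.mono fun z hz => by rwa [norm_sub_rev])
      rw [← hmass, ← hac, ← smul_sub, norm_smul, Real.norm_of_nonneg ha.le, norm_sub_rev] at h
      exact le_of_mul_le_mul_left h ha
    rw [← hac]
    exact norm_integral_smul_sub_le c hq₁ hq₁i hq₁u hc

theorem exists_weightedAverage_eq_integral_add {p w : Y → ℝ} {u : Y → E} {m : ℝ}
    (hp : 0 ≤ᵐ[μ] p) (hpi : Integrable p μ) (hp1 : ∫ y, p y ∂μ = 1)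
    (hpu : Integrable (fun y => p y • u y) μ)
    (hw : AEStronglyMeasurable w μ) (hm : 0 < m) (hmw : ∀ᵐ y ∂μ, m ≤ w y ∧ w y ≤ 1) :
    ∃ b : Y → ℝ, 0 ≤ᵐ[μ] b ∧ Integrable b μ ∧ Integrable (fun y => b y • u y) μ ∧
      ∫ y, b y ∂μ = 1 - m ∧
      weightedAverage μ (fun y => w y * p y) u = (∫ y, b y • u y ∂μ) + m • ∫ y, p y • u y ∂μ := by
  have hwb : ∀ᵐ y ∂μ, ‖w y‖ ≤ 1 := hmw.mono fun y hy => by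
    rw [Real.norm_eq_abs, abs_le]; constructor <;> linarith [hy.1, hy.2]
  have hwpi : Integrable (fun y => w y * p y) μ := hpi.bdd_mul hw hwb
  have hwpu : Integrable (fun y => (w y * p y) • u y) μ := by
    refine (hpu.bdd_smul 1 hw hwb).congr (.of_forall fun y => ?_)
    simp [mul_smul]
  set a := ∫ y, w y * p y ∂μ
  have hma : m ≤ a := by
    calc m = ∫ y, m * p y ∂μ := by rw [integral_const_mul, hp1, mul_one]
      _ ≤ a := integral_mono_ae (hpi.const_mul m) hwpi <| by
          filter_upwards [hp, hmw] with y hpy hwy using mul_le_mul_of_nonneg_right hwy.1 hpy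
  have ha1 : a ≤ 1 := by
    calc a ≤ ∫ y, p y ∂μ := integral_mono_ae hwpi hpi <| by
          filter_upwards [hp, hmw] with y hpy hwy using mul_le_of_le_one_left hpy hwy.2
      _ = 1 := hp1
  have ha : 0 < a := hm.trans_le hma
  have hbu : (fun y => (a⁻¹ * (w y * p y) - m * p y) • u y) =
      fun y => a⁻¹ • ((w y * p y) • u y) - m • (p y • u y) := by
    funext y; simp only [sub_smul, mul_smul]
  have hi₁ : Integrable (fun y => a⁻¹ • ((w y * p y) • u y)) μ := hwpu.smul a⁻¹
  have hi₂ : Integrable (fun y => m • (p y • u y)) μ := hpu.smul m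
  refine ⟨fun y => a⁻¹ * (w y * p y) - m * p y, ?_, (hwpi.const_mul _).sub (hpi.const_mul m),
    ?_, ?_, ?_⟩
  · filter_upwards [hp, hmw] with y hpy hwy
    have h1 : w y * p y ≤ a⁻¹ * (w y * p y) :=
      le_mul_of_one_le_left (mul_nonneg (hm.le.trans hwy.1) hpy) (one_le_inv₀ ha |>.2 ha1)
    have h2 : m * p y ≤ w y * p y := mul_le_mul_of_nonneg_right hwy.1 hpy
    simp only [Pi.zero_apply]
    linarith
  · rw [hbu]; exact hi₁.sub hi₂
  · rw [integral_sub (hwpi.const_mul _) (hpi.const_mul m), integral_const_mul, integral_const_mul,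
      inv_mul_cancel₀ ha.ne', hp1, mul_one]
  · rw [hbu, integral_sub hi₁ hi₂, integral_smul, integral_smul,
      sub_add_cancel, weightedAverage]

/-- Doeblin's contraction argument: both weights contain the common part `m • p`. -/
theorem norm_weightedAverage_sub_le [CompleteSpace E] {p w₁ w₂ : Y → ℝ} {u : Y → E} {m D : ℝ}
    (hp : 0 ≤ᵐ[μ] p) (hpi : Integrable p μ) (hp1 : ∫ y, p y ∂μ = 1)
    (hpu : Integrable (fun y => p y • u y) μ) (hm : 0 < m)
    (hw₁ : AEStronglyMeasurable w₁ μ) (hmw₁ : ∀ᵐ y ∂μ, m ≤ w₁ y ∧ w₁ y ≤ 1)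
    (hw₂ : AEStronglyMeasurable w₂ μ) (hmw₂ : ∀ᵐ y ∂μ, m ≤ w₂ y ∧ w₂ y ≤ 1)
    (hu : ∀ᵐ y ∂μ, ∀ᵐ z ∂μ, ‖u y - u z‖ ≤ D) :
    ‖weightedAverage μ (fun y => w₁ y * p y) u - weightedAverage μ (fun y => w₂ y * p y) u‖ ≤
      (1 - m) * D := by
  obtain ⟨b₁, hb₁, hb₁i, hb₁u, hb₁1, h₁⟩ :=
    exists_weightedAverage_eq_integral_add hp hpi hp1 hpu hw₁ hm hmw₁
  obtain ⟨b₂, hb₂, hb₂i, hb₂u, hb₂1, h₂⟩ :=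
    exists_weightedAverage_eq_integral_add hp hpi hp1 hpu hw₂ hm hmw₂
  rw [h₁, h₂, add_sub_add_right_eq_sub, ← hb₁1]
  exact norm_integral_smul_sub_integral_smul_le hb₁ hb₂ hb₁i hb₂i hb₁u hb₂u
    (hb₁1.trans hb₂1.symm) hu

end WeightedAverage

section Diameter

variable {d : ℕ} {Ω₀ : Set (Euc d)}

theorem diamF_nonneg (f : Euc d → Euc d) : 0 ≤ diamF d Ω₀ f :=
  Real.sSup_nonneg <| by rintro _ ⟨x, -, y, -, rfl⟩; exact norm_nonneg _

theorem diamF_le {f : Euc d → Euc d} {c : ℝ} (hc : 0 ≤ c)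
    (h : ∀ x ∈ closure Ω₀, ∀ y ∈ closure Ω₀, ‖f x - f y‖ ≤ c) : diamF d Ω₀ f ≤ c :=
  Real.sSup_le (by rintro _ ⟨x, hx, y, hy, rfl⟩; exact h x hx y hy) hc

theorem diamF_eq_sSup_image (f : Euc d → Euc d) :
    diamF d Ω₀ f =
      sSup ((fun p : Euc d × Euc d => ‖f p.1 - f p.2‖) '' (closure Ω₀ ×ˢ closure Ω₀)) := by
  unfold diamF
  congr 1
  ext r
  constructor
  · rintro ⟨x, hx, y, hy, rfl⟩; exact ⟨(x, y), ⟨hx, hy⟩, rfl⟩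
  · rintro ⟨⟨x, y⟩, ⟨hx, hy⟩, rfl⟩; exact ⟨x, hx, y, hy, rfl⟩

theorem norm_sub_le_diamF (hK : IsCompact (closure Ω₀)) {f : Euc d → Euc d}
    (hf : ContinuousOn f (closure Ω₀)) {x y : Euc d} (hx : x ∈ closure Ω₀)
    (hy : y ∈ closure Ω₀) : ‖f x - f y‖ ≤ diamF d Ω₀ f := by
  have hcont : ContinuousOn (fun p : Euc d × Euc d => ‖f p.1 - f p.2‖)
      (closure Ω₀ ×ˢ closure Ω₀) :=
    ((hf.comp continuousOn_fst fun _ hp => hp.1).sub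
      (hf.comp continuousOn_snd fun _ hp => hp.2)).norm
  rw [diamF_eq_sSup_image]
  exact le_csSup ((hK.prod hK).image_of_continuousOn hcont).bddAbove ⟨(x, y), ⟨hx, hy⟩, rfl⟩

theorem diamF_of_dim_zero (Ω₀ : Set (Euc 0)) (f : Euc 0 → Euc 0) : diamF 0 Ω₀ f = 0 :=
  le_antisymm (diamF_le le_rfl fun x _ y _ => by rw [Subsingleton.elim (f x) (f y), sub_self,
    norm_zero]) (diamF_nonneg f)

theorem continuousOn_diamF (hK : IsCompact (closure Ω₀)) {S : Set ℝ} {w : ℝ → Euc d → Euc d}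
    (hw : ContinuousOn (fun p : ℝ × Euc d => w p.1 p.2) (S ×ˢ closure Ω₀)) :
    ContinuousOn (fun t => diamF d Ω₀ (w t)) S := by
  have hcont := (hK.prod hK).continuousOn_sSup_image (S := S)
    (f := fun t (p : Euc d × Euc d) => ‖w t p.1 - w t p.2‖)
  refine (hcont ?_).congr fun t _ => diamF_eq_sSup_image (w t)
  have h₁ : ContinuousOn (fun q : ℝ × (Euc d × Euc d) => w q.1 q.2.1)
      (S ×ˢ (closure Ω₀ ×ˢ closure Ω₀)) :=
    hw.comp (f := fun q : ℝ × (Euc d × Euc d) => (q.1, q.2.1)) (by fun_prop)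
      fun q hq => ⟨hq.1, hq.2.1⟩
  have h₂ : ContinuousOn (fun q : ℝ × (Euc d × Euc d) => w q.1 q.2.2)
      (S ×ˢ (closure Ω₀ ×ˢ closure Ω₀)) :=
    hw.comp (f := fun q : ℝ × (Euc d × Euc d) => (q.1, q.2.2)) (by fun_prop)
      fun q hq => ⟨hq.1, hq.2.2⟩
  exact (h₁.sub h₂).norm

theorem diamF_le_of_forall_mem {f : Euc d → Euc d} (hf : ContinuousOn f (closure Ω₀)) {c : ℝ}
    (hc : 0 ≤ c) (h : ∀ x ∈ Ω₀, ∀ y ∈ Ω₀, ‖f x - f y‖ ≤ c) : diamF d Ω₀ f ≤ c := by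
  have hcont : ContinuousOn (fun p : Euc d × Euc d => ‖f p.1 - f p.2‖)
      (closure (Ω₀ ×ˢ Ω₀)) := by
    rw [closure_prod_eq]
    exact ((hf.comp continuousOn_fst fun _ hp => hp.1).sub
      (hf.comp continuousOn_snd fun _ hp => hp.2)).norm
  refine diamF_le hc fun x hx y hy => ?_
  have hxy : (x, y) ∈ closure (Ω₀ ×ˢ Ω₀) := by rw [closure_prod_eq]; exact ⟨hx, hy⟩
  have hle := le_on_closure (f := fun p : Euc d × Euc d => ‖f p.1 - f p.2‖) (g := fun _ => c)
    (fun p hp => h p.1 hp.1 p.2 hp.2) hcont continuousOn_const hxy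
  exact hle

end Diameter

namespace GoodInfluence

variable {d : ℕ} {ψ : Euc d → ℝ} {ψt : ℝ → ℝ}

theorem profile_pos (hψ : GoodInfluence d ψ ψt) {r : ℝ} (hr : 0 ≤ r) : 0 < ψt r :=
  hψ.2.1 r hr

theorem pos (hψ : GoodInfluence d ψ ψt) (x : Euc d) : 0 < ψ x := by
  rw [hψ.1]; exact hψ.profile_pos (norm_nonneg x)

theorem le_profile_of_norm_le (hψ : GoodInfluence d ψ ψt) {x : Euc d} {r : ℝ}
    (hx : ‖x‖ ≤ r) : ψt r ≤ ψ x := by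
  rw [hψ.1]; exact hψ.2.2.1 (norm_nonneg x) ((norm_nonneg x).trans hx) hx

theorem profile_le_one (hψ : GoodInfluence d ψ ψt) {r : ℝ} (hr : 0 ≤ r) : ψt r ≤ 1 :=
  hψ.2.2.2.1 ▸ hψ.2.2.1 (mem_Ici.2 le_rfl) hr hr

theorem le_one (hψ : GoodInfluence d ψ ψt) (x : Euc d) : ψ x ≤ 1 := by
  rw [hψ.1]; exact hψ.profile_le_one (norm_nonneg x)

theorem continuous (hψ : GoodInfluence d ψ ψt) : Continuous ψ := by
  obtain ⟨K, hK⟩ := hψ.2.2.2.2; exact hK.continuous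

/-- In positive dimension the profile is read off along a unit vector, so it inherits the
continuity of `ψ`. -/
theorem continuousOn_profile (hψ : GoodInfluence d ψ ψt) (hd : 0 < d) :
    ContinuousOn ψt (Ici 0) := by
  have : Nonempty (Fin d) := ⟨⟨0, hd⟩⟩
  obtain ⟨e, he⟩ := exists_norm_eq (Euc d) zero_le_one
  have hcont : Continuous fun r : ℝ => ψ (r • e) := hψ.continuous.comp (by fun_prop)
  refine hcont.continuousOn.congr fun r hr => ?_
  simp [hψ.1, norm_smul, he, abs_of_nonneg (mem_Ici.mp hr)]

end GoodInfluence

theorem ae_restrict_mem_closure {α : Type*} [TopologicalSpace α] [MeasurableSpace α]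
    [OpensMeasurableSpace α] {μ : Measure α} (s : Set α) : ∀ᵐ y ∂μ.restrict s, y ∈ closure s :=
  ae_restrict_of_ae_restrict_of_subset subset_closure
    (ae_restrict_mem isClosed_closure.measurableSet)

theorem ContinuousOn.aestronglyMeasurable_of_closure {α β : Type*} [TopologicalSpace α]
    [MeasurableSpace α] [OpensMeasurableSpace α] [TopologicalSpace β]
    [TopologicalSpace.PseudoMetrizableSpace β] [SecondCountableTopologyEither α β]
    {μ : Measure α} {f : α → β} {s : Set α} (hf : ContinuousOn f (closure s)) :
    AEStronglyMeasurable f (μ.restrict s) :=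
  (hf.aestronglyMeasurable isClosed_closure.measurableSet).mono_measure
    (Measure.restrict_mono subset_closure le_rfl)

section CuckerSmale

variable {d : ℕ} {τ : ℝ} {Ω₀ : Set (Euc d)} {ρ₀ ψ : Euc d → ℝ} {ψt : ℝ → ℝ}
  {η v : ℝ → Euc d → Euc d}

variable (τ Ω₀ ρ₀ ψ η v) in
/-- The alignment term of the velocity equation: the `ψ`-weighted mean of the delayed
velocities seen from `η t x`. -/
def alignment (t : ℝ) (x : Euc d) : Euc d :=
  weightedAverage (volume.restrict Ω₀) (fun y => ψ (η t x - η (t - τ) y) * ρ₀ y) (v (t - τ))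

theorem IsCSSol.hasDerivAt_flow (hsol : IsCSSol d τ Ω₀ ρ₀ ψ η v) {x : Euc d}
    (hx : x ∈ closure Ω₀) {t : ℝ} (ht : -τ < t) : HasDerivAt (fun s => η s x) (v t x) t :=
  (hsol.2.1 x hx t ht.le).hasDerivAt (Ici_mem_nhds ht)

theorem IsCSSol.continuousOn_flow (hsol : IsCSSol d τ Ω₀ ρ₀ ψ η v) {x : Euc d}
    (hx : x ∈ closure Ω₀) : ContinuousOn (fun s => η s x) (Ici (-τ)) :=
  fun t ht => (hsol.2.1 x hx t ht).continuousWithinAt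

theorem IsCSSol.hasDerivAt_exp_smul_vel (hsol : IsCSSol d τ Ω₀ ρ₀ ψ η v) {x : Euc d}
    (hx : x ∈ Ω₀) {t : ℝ} (ht : 0 < t) :
    HasDerivAt (fun s => exp s • v s x) (exp t • alignment τ Ω₀ ρ₀ ψ η v t x) t := by
  have h := (hasDerivAt_exp t).smul (hsol.2.2 x hx t ht)
  rwa [smul_sub, sub_add_cancel] at h

theorem norm_alignment_le (hρ : GoodDensity d Ω₀ ρ₀) (hψ : GoodInfluence d ψ ψt) {t C : ℝ}
    (hC : 0 ≤ C) (hv : ∀ y ∈ closure Ω₀, ‖v (t - τ) y‖ ≤ C) (x : Euc d) :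
    ‖alignment τ Ω₀ ρ₀ ψ η v t x‖ ≤ C :=
  norm_weightedAverage_le (.of_forall fun y => mul_nonneg (hψ.pos _).le (hρ.2.1 y))
    ((ae_restrict_mem_closure Ω₀).mono hv) hC

theorem norm_alignment_sub_le (hK : IsCompact (closure Ω₀)) (hρ : GoodDensity d Ω₀ ρ₀)
    (hψ : GoodInfluence d ψ ψt) {t m : ℝ} (hη : ContinuousOn (η (t - τ)) (closure Ω₀))
    (hv : ContinuousOn (v (t - τ)) (closure Ω₀)) (hm : 0 < m) {x₁ x₂ : Euc d}
    (hm₁ : ∀ y ∈ closure Ω₀, m ≤ ψ (η t x₁ - η (t - τ) y))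
    (hm₂ : ∀ y ∈ closure Ω₀, m ≤ ψ (η t x₂ - η (t - τ) y)) :
    ‖alignment τ Ω₀ ρ₀ ψ η v t x₁ - alignment τ Ω₀ ρ₀ ψ η v t x₂‖ ≤
      (1 - m) * diamF d Ω₀ (v (t - τ)) := by
  obtain ⟨hρm, hρ0, -, hρi, hρ1⟩ := hρ
  have hK' := ae_restrict_mem_closure (μ := volume) Ω₀
  obtain ⟨C, hC⟩ := hK.exists_bound_of_continuousOn hv
  have hρv : Integrable (fun y => ρ₀ y • v (t - τ) y) (volume.restrict Ω₀) :=
    hρi.smul_bdd C hv.aestronglyMeasurable_of_closure (hK'.mono hC)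
  have hw : ∀ x, AEStronglyMeasurable (fun y => ψ (η t x - η (t - τ) y)) (volume.restrict Ω₀) :=
    fun x => (hψ.continuous.comp_continuousOn
      (continuousOn_const.sub hη)).aestronglyMeasurable_of_closure
  refine norm_weightedAverage_sub_le (.of_forall hρ0) hρi hρ1 hρv hm
    (hw x₁) ?_ (hw x₂) ?_ ?_
  · filter_upwards [hK'] with y hy using ⟨hm₁ y hy, hψ.le_one _⟩
  · filter_upwards [hK'] with y hy using ⟨hm₂ y hy, hψ.le_one _⟩
  · filter_upwards [hK'] with y hy
    filter_upwards [hK'] with z hz using norm_sub_le_diamF hK hv hy hz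

theorem velBound_nonneg : 0 ≤ velBound d τ Ω₀ v :=
  Real.sSup_nonneg <| by rintro _ ⟨s, -, x, -, rfl⟩; exact norm_nonneg _

/-- One delay step of the maximum principle for the velocities. -/
theorem norm_vel_le_of_delay_bound (hρ : GoodDensity d Ω₀ ρ₀) (hψ : GoodInfluence d ψ ψt)
    (hsol : IsCSSol d τ Ω₀ ρ₀ ψ η v)
    (hv_cont : ContinuousOn (fun p : ℝ × Euc d => v p.1 p.2) (Ici (-τ) ×ˢ closure Ω₀))
    {T C : ℝ} (hT : 0 ≤ T) (hC : ∀ s ∈ Icc (-τ) T, ∀ y ∈ closure Ω₀, ‖v s y‖ ≤ C)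
    {t : ℝ} (ht : t ∈ Icc (-τ) (T + τ)) {x : Euc d} (hx : x ∈ closure Ω₀) : ‖v t x‖ ≤ C := by
  rcases le_or_gt t T with htT | htT
  · exact hC t ⟨ht.1, htT⟩ x hx
  have ht0 : 0 < t := hT.trans_lt htT
  refine le_on_closure (fun x hx => ?_) (hv_cont.uncurry_left t ht.1).norm continuousOn_const hx
  have hv0 : ‖v 0 x‖ ≤ C := hC 0 ⟨by linarith [ht.2], hT⟩ x (subset_closure hx)
  have hbound : ∀ s ∈ Ioo 0 t, ‖exp s • alignment τ Ω₀ ρ₀ ψ η v s x‖ ≤ exp s * C := by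
    intro s hs
    rw [norm_smul, norm_of_nonneg (exp_pos s).le]
    refine mul_le_mul_of_nonneg_left (norm_alignment_le hρ hψ ((norm_nonneg _).trans hv0)
      (fun y hy => hC (s - τ) ⟨by linarith [hs.1], by linarith [hs.2, ht.2]⟩ y hy) x)
      (exp_pos s).le
  have hcont : ContinuousOn (fun s => exp s • v s x) (Icc 0 t) :=
    continuous_exp.continuousOn.smul ((hv_cont.uncurry_right x (subset_closure hx)).mono
      fun s hs => by simp only [mem_Ici]; linarith [hs.1, ht.2])
  have key := norm_sub_le_integral_of_norm_deriv_le ht0.le hcont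
    (fun s hs => hsol.hasDerivAt_exp_smul_vel hx hs.1) (by fun_prop) hbound
  rw [intervalIntegral.integral_mul_const, integral_exp, exp_zero, one_smul] at key
  have h : exp t * ‖v t x‖ ≤ exp t * C := by
    calc exp t * ‖v t x‖ = ‖exp t • v t x‖ := by rw [norm_smul, norm_of_nonneg (exp_pos t).le]
      _ ≤ ‖exp t • v t x - v 0 x‖ + ‖v 0 x‖ := by
          linarith [norm_sub_norm_le (exp t • v t x) (v 0 x)]
      _ ≤ exp t * C := by linarith
  exact le_of_mul_le_mul_left h (exp_pos t)

theorem norm_vel_le_velBound (hτ : 0 < τ) (hρ : GoodDensity d Ω₀ ρ₀) (hψ : GoodInfluence d ψ ψt)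
    (hsol : IsCSSol d τ Ω₀ ρ₀ ψ η v)
    (hv_cont : ContinuousOn (fun p : ℝ × Euc d => v p.1 p.2) (Ici (-τ) ×ˢ closure Ω₀))
    (hRV : BddAbove {r : ℝ | ∃ s ∈ Icc (-τ) 0, ∃ x ∈ closure Ω₀, r = ‖v s x‖})
    {t : ℝ} (ht : -τ ≤ t) {x : Euc d} (hx : x ∈ closure Ω₀) : ‖v t x‖ ≤ velBound d τ Ω₀ v := by
  have hstep : ∀ n : ℕ, ∀ s ∈ Icc (-τ) (n * τ), ∀ y ∈ closure Ω₀,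
      ‖v s y‖ ≤ velBound d τ Ω₀ v := by
    intro n
    induction n with
    | zero => exact fun s hs y hy => le_csSup hRV ⟨s, by simpa using hs, y, hy, rfl⟩
    | succ n ih =>
      refine fun s hs y hy => norm_vel_le_of_delay_bound hρ hψ hsol hv_cont (by positivity) ih
        ⟨hs.1, ?_⟩ hy
      linarith [hs.2, show ((n + 1 : ℕ) : ℝ) * τ = n * τ + τ by push_cast; ring]
  obtain ⟨n, hn⟩ := exists_nat_ge (t / τ)
  exact hstep n t ⟨ht, (div_le_iff₀ hτ).1 hn⟩ x hx

theorem norm_flow_sub_delay_le (hτ : 0 < τ) (hρ : GoodDensity d Ω₀ ρ₀)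
    (hψ : GoodInfluence d ψ ψt)
    (hsol : IsCSSol d τ Ω₀ ρ₀ ψ η v)
    (hv_cont : ContinuousOn (fun p : ℝ × Euc d => v p.1 p.2) (Ici (-τ) ×ˢ closure Ω₀))
    (hRV : BddAbove {r : ℝ | ∃ s ∈ Icc (-τ) 0, ∃ x ∈ closure Ω₀, r = ‖v s x‖})
    {s : ℝ} (hs : 0 ≤ s) {x : Euc d} (hx : x ∈ closure Ω₀) :
    ‖η s x - η (s - τ) x‖ ≤ velBound d τ Ω₀ v * τ := by
  have key := norm_sub_le_integral_of_norm_deriv_le (by linarith : s - τ ≤ s)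
    ((hsol.continuousOn_flow hx).mono fun r hr => by simp only [mem_Ici]; linarith [hr.1])
    (fun r hr => hsol.hasDerivAt_flow hx (by linarith [hr.1])) continuousOn_const
    (fun r hr => norm_vel_le_velBound hτ hρ hψ hsol hv_cont hRV (by linarith [hr.1]) hx)
  simpa [mul_comm] using key

/-- Each particle moves by at most `R_V τ` during one delay. -/
theorem profile_le_influence (hτ : 0 < τ) (hK : IsCompact (closure Ω₀))
    (hρ : GoodDensity d Ω₀ ρ₀) (hψ : GoodInfluence d ψ ψt) (hsol : IsCSSol d τ Ω₀ ρ₀ ψ η v)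
    (hη_cont : ContinuousOn (fun p : ℝ × Euc d => η p.1 p.2) (Ici (-τ) ×ˢ closure Ω₀))
    (hv_cont : ContinuousOn (fun p : ℝ × Euc d => v p.1 p.2) (Ici (-τ) ×ˢ closure Ω₀))
    (hRV : BddAbove {r : ℝ | ∃ s ∈ Icc (-τ) 0, ∃ x ∈ closure Ω₀, r = ‖v s x‖})
    {s c : ℝ} (hs : 0 ≤ s) (hc : diamF d Ω₀ (η (s - τ)) ≤ c) {x y : Euc d}
    (hx : x ∈ closure Ω₀) (hy : y ∈ closure Ω₀) :
    ψt (c + velBound d τ Ω₀ v * τ) ≤ ψ (η s x - η (s - τ) y) := by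
  refine hψ.le_profile_of_norm_le ?_
  have hdiam := norm_sub_le_diamF hK (hη_cont.uncurry_left (s - τ) (by simp; linarith)) hx hy
  calc ‖η s x - η (s - τ) y‖ ≤ ‖η s x - η (s - τ) x‖ + ‖η (s - τ) x - η (s - τ) y‖ :=
        norm_sub_le_norm_sub_add_norm_sub _ _ _
    _ ≤ velBound d τ Ω₀ v * τ + c :=
        add_le_add (norm_flow_sub_delay_le hτ hρ hψ hsol hv_cont hRV hs hx) (hdiam.trans hc)
    _ = c + velBound d τ Ω₀ v * τ := add_comm _ _

theorem norm_alignment_sub_le_forcing (hτ : 0 < τ) (hK : IsCompact (closure Ω₀))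
    (hρ : GoodDensity d Ω₀ ρ₀) (hψ : GoodInfluence d ψ ψt) (hsol : IsCSSol d τ Ω₀ ρ₀ ψ η v)
    (hη_cont : ContinuousOn (fun p : ℝ × Euc d => η p.1 p.2) (Ici (-τ) ×ˢ closure Ω₀))
    (hv_cont : ContinuousOn (fun p : ℝ × Euc d => v p.1 p.2) (Ici (-τ) ×ˢ closure Ω₀))
    (hRV : BddAbove {r : ℝ | ∃ s ∈ Icc (-τ) 0, ∃ x ∈ closure Ω₀, r = ‖v s x‖})
    {s c : ℝ} (hs : 0 ≤ s) (hc : diamF d Ω₀ (η (s - τ)) ≤ c) {x₁ x₂ : Euc d}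
    (hx₁ : x₁ ∈ closure Ω₀) (hx₂ : x₂ ∈ closure Ω₀) :
    ‖alignment τ Ω₀ ρ₀ ψ η v s x₁ - alignment τ Ω₀ ρ₀ ψ η v s x₂‖ ≤
      (1 - ψt (c + velBound d τ Ω₀ v * τ)) * diamF d Ω₀ (v (s - τ)) := by
  have hsτ : s - τ ∈ Ici (-τ) := by simp; linarith
  have hc0 : 0 ≤ c + velBound d τ Ω₀ v * τ :=
    add_nonneg ((diamF_nonneg _).trans hc) (mul_nonneg velBound_nonneg hτ.le)
  exact norm_alignment_sub_le hK hρ hψ (hη_cont.uncurry_left _ hsτ) (hv_cont.uncurry_left _ hsτ)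
    (hψ.profile_pos hc0)
    (fun y hy => profile_le_influence hτ hK hρ hψ hsol hη_cont hv_cont hRV hs hc hx₁ hy)
    (fun y hy => profile_le_influence hτ hK hρ hψ hsol hη_cont hv_cont hRV hs hc hx₂ hy)

theorem diamF_flow_le (hτ : 0 < τ) (hK : IsCompact (closure Ω₀))
    (hsol : IsCSSol d τ Ω₀ ρ₀ ψ η v)
    (hη_cont : ContinuousOn (fun p : ℝ × Euc d => η p.1 p.2) (Ici (-τ) ×ˢ closure Ω₀))
    (hv_cont : ContinuousOn (fun p : ℝ × Euc d => v p.1 p.2) (Ici (-τ) ×ˢ closure Ω₀))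
    {t : ℝ} (ht : 0 ≤ t) :
    diamF d Ω₀ (η t) ≤ diamF d Ω₀ (η 0) + ∫ s in 0..t, diamF d Ω₀ (v s) := by
  have hIcc : Icc 0 t ⊆ Ici (-τ) := fun s hs => by simp only [mem_Ici]; linarith [hs.1]
  refine diamF_le (add_nonneg (diamF_nonneg _)
    (intervalIntegral.integral_nonneg ht fun s _ => diamF_nonneg _)) fun x hx y hy => ?_
  have key := norm_sub_le_integral_of_norm_deriv_le ht (f := fun s => η s x - η s y)
    (((hsol.continuousOn_flow hx).sub (hsol.continuousOn_flow hy)).mono hIcc)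
    (fun s hs => (hsol.hasDerivAt_flow hx (by linarith [hs.1])).sub
      (hsol.hasDerivAt_flow hy (by linarith [hs.1])))
    ((continuousOn_diamF hK hv_cont).mono hIcc)
    (fun s hs => norm_sub_le_diamF hK (hv_cont.uncurry_left s (hIcc (Ioo_subset_Icc_self hs)))
      hx hy)
  have h0 := norm_sub_le_diamF hK (hη_cont.uncurry_left 0 (by simp; linarith)) hx hy
  linarith [norm_sub_norm_le (η t x - η t y) (η 0 x - η 0 y)]

/-- Duhamel's formula for `e^t (v_t(x) - v_t(y))`, turned into an estimate. -/
theorem diamF_vel_le_of_alignment_bound (hτ : 0 < τ) (hK : IsCompact (closure Ω₀))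
    (hsol : IsCSSol d τ Ω₀ ρ₀ ψ η v)
    (hv_cont : ContinuousOn (fun p : ℝ × Euc d => v p.1 p.2) (Ici (-τ) ×ˢ closure Ω₀))
    {G : ℝ → ℝ} {t : ℝ} (ht : 0 ≤ t) (hG : ContinuousOn G (Icc 0 t))
    (hG0 : ∀ s ∈ Icc 0 t, 0 ≤ G s)
    (hFG : ∀ s ∈ Ioo 0 t, ∀ x ∈ Ω₀, ∀ y ∈ Ω₀,
      ‖alignment τ Ω₀ ρ₀ ψ η v s x - alignment τ Ω₀ ρ₀ ψ η v s y‖ ≤ G s) :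
    diamF d Ω₀ (v t) ≤ exp (-t) * (diamF d Ω₀ (v 0) + ∫ s in 0..t, exp s * G s) := by
  have hIcc : Icc 0 t ⊆ Ici (-τ) := fun s hs => by simp only [mem_Ici]; linarith [hs.1]
  have hint : 0 ≤ ∫ s in 0..t, exp s * G s :=
    intervalIntegral.integral_nonneg ht fun s hs => mul_nonneg (exp_pos s).le (hG0 s hs)
  refine diamF_le_of_forall_mem (hv_cont.uncurry_left t (hIcc ⟨ht, le_rfl⟩))
    (mul_nonneg (exp_pos _).le (add_nonneg (diamF_nonneg _) hint)) fun x hx y hy => ?_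
  have hvt : ∀ z ∈ Ω₀, ContinuousOn (fun s => v s z) (Icc 0 t) :=
    fun z hz => (hv_cont.uncurry_right z (subset_closure hz)).mono hIcc
  have key := norm_sub_le_integral_of_norm_deriv_le ht
    (f := fun s => exp s • v s x - exp s • v s y) (R := fun s => exp s * G s)
    ((continuous_exp.continuousOn.smul (hvt x hx)).sub
      (continuous_exp.continuousOn.smul (hvt y hy)))
    (fun s hs => (hsol.hasDerivAt_exp_smul_vel hx hs.1).sub
      (hsol.hasDerivAt_exp_smul_vel hy hs.1))
    (continuous_exp.continuousOn.mul hG)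
    (fun s hs => by
      rw [← smul_sub, norm_smul, norm_of_nonneg (exp_pos s).le]
      exact mul_le_mul_of_nonneg_left (hFG s hs x hx y hy) (exp_pos s).le)
  have h0 := norm_sub_le_diamF hK (hv_cont.uncurry_left 0 (hIcc ⟨le_rfl, ht⟩))
    (subset_closure hx) (subset_closure hy)
  simp only [exp_zero, one_smul, ← smul_sub] at key
  have h : exp t * ‖v t x - v t y‖ ≤ diamF d Ω₀ (v 0) + ∫ s in 0..t, exp s * G s := by
    calc exp t * ‖v t x - v t y‖ = ‖exp t • (v t x - v t y)‖ := by
          rw [norm_smul, norm_of_nonneg (exp_pos t).le]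
      _ ≤ _ := by linarith [norm_sub_norm_le (exp t • (v t x - v t y)) (v 0 x - v 0 y)]
  rwa [exp_neg, ← div_eq_inv_mul, le_div_iff₀ (exp_pos t), mul_comm]

variable (τ Ω₀ ψt v) in
/-- The integrand `[1 - ψ̃(X(s - τ) + R_V τ)] d_V(s - τ)` in the definition of `V`. -/
def forcing (X : ℝ → ℝ) (s : ℝ) : ℝ :=
  (1 - ψt (X (s - τ) + velBound d τ Ω₀ v * τ)) * diamF d Ω₀ (v (s - τ))

theorem forcing_nonneg (hτ : 0 < τ) (hψ : GoodInfluence d ψ ψt) {X : ℝ → ℝ}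
    (hX0 : ∀ t, -τ ≤ t → 0 ≤ X t) {s : ℝ} (hs : 0 ≤ s) : 0 ≤ forcing τ Ω₀ ψt v X s :=
  mul_nonneg (sub_nonneg.2 (hψ.profile_le_one (add_nonneg (hX0 _ (by linarith))
    (mul_nonneg velBound_nonneg hτ.le)))) (diamF_nonneg _)

/-- In dimension `0` the profile `ψt` is unconstrained off `0`, but then `d_V = 0`. -/
theorem continuousOn_forcing (hτ : 0 < τ) (hK : IsCompact (closure Ω₀))
    (hψ : GoodInfluence d ψ ψt)
    (hv_cont : ContinuousOn (fun p : ℝ × Euc d => v p.1 p.2) (Ici (-τ) ×ˢ closure Ω₀))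
    {X : ℝ → ℝ} (hX : ContinuousOn X (Ici (-τ))) (hX0 : ∀ t, -τ ≤ t → 0 ≤ X t) :
    ContinuousOn (forcing τ Ω₀ ψt v X) (Ici 0) := by
  have hsub : MapsTo (fun s => s - τ) (Ici (0 : ℝ)) (Ici (-τ)) := fun s hs => by
    simp only [mem_Ici] at hs ⊢; linarith
  rcases Nat.eq_zero_or_pos d with rfl | hd
  · have h0 : forcing τ Ω₀ ψt v X = fun _ => 0 :=
      funext fun s => by simp [forcing, diamF_of_dim_zero]
    exact h0 ▸ continuousOn_const
  · refine (continuousOn_const.sub ((hψ.continuousOn_profile hd).comp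
      ((hX.comp (by fun_prop) hsub).add continuousOn_const) fun s hs => ?_)).mul
      ((continuousOn_diamF hK hv_cont).comp (by fun_prop) hsub)
    exact add_nonneg (hX0 _ (hsub hs)) (mul_nonneg velBound_nonneg hτ.le)

theorem diamF_vel_le_forcing (hτ : 0 < τ) (hK : IsCompact (closure Ω₀))
    (hρ : GoodDensity d Ω₀ ρ₀) (hψ : GoodInfluence d ψ ψt) (hsol : IsCSSol d τ Ω₀ ρ₀ ψ η v)
    (hη_cont : ContinuousOn (fun p : ℝ × Euc d => η p.1 p.2) (Ici (-τ) ×ˢ closure Ω₀))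
    (hv_cont : ContinuousOn (fun p : ℝ × Euc d => v p.1 p.2) (Ici (-τ) ×ˢ closure Ω₀))
    (hRV : BddAbove {r : ℝ | ∃ s ∈ Icc (-τ) 0, ∃ x ∈ closure Ω₀, r = ‖v s x‖})
    {X : ℝ → ℝ} (hX : ContinuousOn X (Ici (-τ)))
    (hXd : ∀ t, -τ ≤ t → diamF d Ω₀ (η t) ≤ X t) {t : ℝ} (ht : 0 ≤ t) :
    diamF d Ω₀ (v t) ≤
      exp (-t) * (diamF d Ω₀ (v 0) + ∫ s in 0..t, exp s * forcing τ Ω₀ ψt v X s) := by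
  have hX0 : ∀ t, -τ ≤ t → 0 ≤ X t := fun t ht => (diamF_nonneg _).trans (hXd t ht)
  exact diamF_vel_le_of_alignment_bound hτ hK hsol hv_cont ht
    ((continuousOn_forcing hτ hK hψ hv_cont hX hX0).mono Icc_subset_Ici_self)
    (fun s hs => forcing_nonneg hτ hψ hX0 hs.1) fun s hs x hx y hy =>
      norm_alignment_sub_le_forcing hτ hK hρ hψ hsol hη_cont hv_cont hRV hs.1.le
        (hXd _ (by linarith [hs.1])) (subset_closure hx) (subset_closure hy)

theorem diamF_flow_le_of_eq (hτ : 0 < τ) (hK : IsCompact (closure Ω₀))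
    (hsol : IsCSSol d τ Ω₀ ρ₀ ψ η v)
    (hη_cont : ContinuousOn (fun p : ℝ × Euc d => η p.1 p.2) (Ici (-τ) ×ˢ closure Ω₀))
    (hv_cont : ContinuousOn (fun p : ℝ × Euc d => v p.1 p.2) (Ici (-τ) ×ˢ closure Ω₀))
    {X : ℝ → ℝ} (hX_init : ∀ t ∈ Icc (-τ) 0, X t = diamF d Ω₀ (η t))
    (hX_def : ∀ t, 0 ≤ t → X t = diamF d Ω₀ (η 0) + ∫ s in 0..t, diamF d Ω₀ (v s))
    {t : ℝ} (ht : -τ ≤ t) : diamF d Ω₀ (η t) ≤ X t := by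
  rcases le_or_gt t 0 with h | h
  · exact (hX_init t ⟨ht, h⟩).ge
  · exact (hX_def t h.le).symm ▸ diamF_flow_le hτ hK hsol hη_cont hv_cont h.le

theorem continuousOn_of_eq_diamF_flow (hτ : 0 < τ) (hK : IsCompact (closure Ω₀))
    (hη_cont : ContinuousOn (fun p : ℝ × Euc d => η p.1 p.2) (Ici (-τ) ×ˢ closure Ω₀))
    (hv_cont : ContinuousOn (fun p : ℝ × Euc d => v p.1 p.2) (Ici (-τ) ×ˢ closure Ω₀))
    {X : ℝ → ℝ} (hX_init : ∀ t ∈ Icc (-τ) 0, X t = diamF d Ω₀ (η t))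
    (hX_def : ∀ t, 0 ≤ t → X t = diamF d Ω₀ (η 0) + ∫ s in 0..t, diamF d Ω₀ (v s)) :
    ContinuousOn X (Ici (-τ)) := by
  have h₁ : ContinuousOn X (Icc (-τ) 0) :=
    ((continuousOn_diamF hK hη_cont).mono Icc_subset_Ici_self).congr hX_init
  have h₂ : ContinuousOn X (Ici 0) :=
    ((continuousOn_primitive_Ici ((continuousOn_diamF hK hv_cont).mono
      (Ici_subset_Ici.2 (by linarith)))).const_add _).congr fun t ht => hX_def t ht
  simpa [Icc_union_Ici_eq_Ici (by linarith : -τ ≤ 0)] using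
    h₁.union_of_isClosed h₂ isClosed_Icc isClosed_Ici

end CuckerSmale

theorem stmt_4_general {d : ℕ} (τ : ℝ) (hτ : 0 < τ)
    (Ω₀ : Set (Euc d))
    (hΩb : Bornology.IsBounded Ω₀)
    (ρ₀ : Euc d → ℝ) (hρ : GoodDensity d Ω₀ ρ₀)
    (ψ : Euc d → ℝ) (ψt : ℝ → ℝ) (hψ : GoodInfluence d ψ ψt)
    (η v : ℝ → Euc d → Euc d)
    (hsol : IsCSSol d τ Ω₀ ρ₀ ψ η v)
    (hη_cont : ContinuousOn (fun p : ℝ × Euc d => η p.1 p.2)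
      (Set.Ici (-τ) ×ˢ closure Ω₀))
    (hv_cont : ContinuousOn (fun p : ℝ × Euc d => v p.1 p.2)
      (Set.Ici (-τ) ×ˢ closure Ω₀))
    (hRV_fin : BddAbove {r : ℝ | ∃ s ∈ Set.Icc (-τ) 0, ∃ x ∈ closure Ω₀, r = ‖v s x‖})
    (X V : ℝ → ℝ)
    (hX_init : ∀ t ∈ Set.Icc (-τ) 0, X t = diamF d Ω₀ (η t))
    (hV_init : ∀ t ∈ Set.Icc (-τ) 0, V t = diamF d Ω₀ (v t))
    (hX_def : ∀ t, 0 ≤ t →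
      X t = diamF d Ω₀ (η 0) + ∫ s in (0 : ℝ)..t, diamF d Ω₀ (v s))
    (hV_def : ∀ t, 0 ≤ t →
      V t = diamF d Ω₀ (v 0) * Real.exp (-t) +
        ∫ s in (0 : ℝ)..t,
          (1 - ψt (X (s - τ) + velBound d τ Ω₀ v * τ)) * diamF d Ω₀ (v (s - τ)) *
            Real.exp (s - t)) :
    (∀ t, 0 < t → HasDerivAt X (diamF d Ω₀ (v t)) t) ∧
    (∀ t, 0 < t → ∃ V' : ℝ, HasDerivAt V V' t ∧
      V' ≤ -V t + (1 - ψt (X (t - τ) + velBound d τ Ω₀ v * τ)) * V (t - τ)) ∧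
    (∀ t, -τ ≤ t → diamF d Ω₀ (v t) ≤ V t) := by
  have hK : IsCompact (closure Ω₀) := hΩb.isCompact_closure
  have hXd := fun t => diamF_flow_le_of_eq hτ hK hsol hη_cont hv_cont hX_init hX_def (t := t)
  have hX := continuousOn_of_eq_diamF_flow hτ hK hη_cont hv_cont hX_init hX_def
  have hX0 : ∀ t, -τ ≤ t → 0 ≤ X t := fun t ht => (diamF_nonneg _).trans (hXd t ht)
  have hG := continuousOn_forcing hτ hK hψ hv_cont hX hX0
  have hV : ∀ t, 0 ≤ t →
      V t = exp (-t) * (diamF d Ω₀ (v 0) + ∫ s in 0..t, exp s * forcing τ Ω₀ ψt v X s) :=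
    fun t ht => by rw [hV_def t ht, mul_add, ← integral_mul_exp_sub, mul_comm (exp (-t))]; rfl
  have hiii : ∀ t, -τ ≤ t → diamF d Ω₀ (v t) ≤ V t := fun t ht => by
    rcases le_or_gt t 0 with h | h
    · exact (hV_init t ⟨ht, h⟩).ge
    · exact (hV t h.le) ▸ diamF_vel_le_forcing hτ hK hρ hψ hsol hη_cont hv_cont hRV_fin hX hXd h.le
  refine ⟨fun t ht => ?_, fun t ht => ?_, hiii⟩
  · have hdV := (continuousOn_diamF hK hv_cont).mono (Ici_subset_Ici.2 (by linarith : -τ ≤ 0))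
    exact ((hasDerivAt_integral_of_continuousOn_Ici hdV ht).const_add _).congr_of_eventuallyEq
      ((eventually_gt_nhds ht).mono fun u hu => hX_def u hu.le)
  · refine ⟨_, (hasDerivAt_exp_neg_mul_add_integral _ hG ht).congr_of_eventuallyEq
      ((eventually_gt_nhds ht).mono fun u hu => hV u hu.le), ?_⟩
    rw [← hV t ht.le]
    exact add_le_add le_rfl (mul_le_mul_of_nonneg_left (hiii (t - τ) (by linarith))
      (sub_nonneg.2 (hψ.profile_le_one
        (add_nonneg (hX0 _ (by linarith)) (mul_nonneg velBound_nonneg hτ.le)))))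

/-- **Differential inequalities for the auxiliary quantities (Lemma 4.2).**
With `d_X(t) = diamF d Ω₀ (η t)`, `d_V(t) = diamF d Ω₀ (v t)`,
`R_V = velBound d τ Ω₀ v`, and `X`, `V` defined by
`X(t) = d_X(0) + ∫₀ᵗ d_V(s) ds`,
`V(t) = d_V(0) e^{-t} + ∫₀ᵗ [1 - ψt(X(s-τ) + R_V τ)] d_V(s-τ) e^{s-t} ds` for `t ≥ 0`
and `X = d_X`, `V = d_V` on `[-τ,0]`, one has for all `t > 0`:
(i) `X'(t) = d_V(t)`; (ii) `V'(t) ≤ -V(t) + [1 - ψt(X(t-τ) + R_V τ)] V(t-τ)`;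
and (iii) `d_V(t) ≤ V(t)` for all `t ≥ -τ`. -/
theorem stmt_4 {d : ℕ} (τ : ℝ) (hτ : 0 < τ)
    (Ω₀ : Set (Euc d)) (hΩo : IsOpen Ω₀) (hΩne : Ω₀.Nonempty)
    (hΩb : Bornology.IsBounded Ω₀)
    (ρ₀ : Euc d → ℝ) (hρ : GoodDensity d Ω₀ ρ₀)
    (ψ : Euc d → ℝ) (ψt : ℝ → ℝ) (hψ : GoodInfluence d ψ ψt)
    (η v : ℝ → Euc d → Euc d)
    (hsol : IsCSSol d τ Ω₀ ρ₀ ψ η v)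
    (hη_cont : ContinuousOn (fun p : ℝ × Euc d => η p.1 p.2)
      (Set.Ici (-τ) ×ˢ closure Ω₀))
    (hv_cont : ContinuousOn (fun p : ℝ × Euc d => v p.1 p.2)
      (Set.Ici (-τ) ×ˢ closure Ω₀))
    (hRV_fin : BddAbove {r : ℝ | ∃ s ∈ Set.Icc (-τ) 0, ∃ x ∈ closure Ω₀, r = ‖v s x‖})
    (X V : ℝ → ℝ)
    (hX_init : ∀ t ∈ Set.Icc (-τ) 0, X t = diamF d Ω₀ (η t))
    (hV_init : ∀ t ∈ Set.Icc (-τ) 0, V t = diamF d Ω₀ (v t))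
    (hX_def : ∀ t, 0 ≤ t →
      X t = diamF d Ω₀ (η 0) + ∫ s in (0 : ℝ)..t, diamF d Ω₀ (v s))
    (hV_def : ∀ t, 0 ≤ t →
      V t = diamF d Ω₀ (v 0) * Real.exp (-t) +
        ∫ s in (0 : ℝ)..t,
          (1 - ψt (X (s - τ) + velBound d τ Ω₀ v * τ)) * diamF d Ω₀ (v (s - τ)) *
            Real.exp (s - t)) :
    (∀ t, 0 < t → HasDerivAt X (diamF d Ω₀ (v t)) t) ∧
    (∀ t, 0 < t → ∃ V' : ℝ, HasDerivAt V V' t ∧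
      V' ≤ -V t + (1 - ψt (X (t - τ) + velBound d τ Ω₀ v * τ)) * V (t - τ)) ∧
    (∀ t, -τ ≤ t → diamF d Ω₀ (v t) ≤ V t) :=
  stmt_4_general τ hτ Ω₀ hΩb ρ₀ hρ ψ ψt hψ η v hsol hη_cont hv_cont hRV_fin X V hX_init hV_init
    hX_def hV_def
end
end

section
/- Let d ∈ ℕ, let Ω₀ ⊂ ℝ^d be a nonempty bounded open set, and let ρ₀ : Ω₀ → ℝ be nonnegative measurable with ∫_{Ω₀} ρ₀ = 1. Let ψ : ℝ^d → ℝ be Lipschitz continuous of the form ψ(x) = ψ̃(|x|) with ψ̃ : [0,∞) → (0,∞) nonincreasing and ψ̃(0) = 1. Let ζ : Ω₀ → ℝ^d and w : Ω₀ → ℝ^d be bounded measurable functions, and for η ∈ ℝ^d define F(η) := ∫_{Ω₀} ψ(η − ζ(y))·w(y)·ρ₀(y) dy and G(η) := ∫_{Ω₀} ψ(η − ζ(y))·ρ₀(y) dy. Then for every R > 0 there exists a constant C_R > 0 such that for all η¹, η² ∈ ℝ^d with |η¹| ≤ R and |η²| ≤ R, one has |F(η¹)/G(η¹) − F(η²)/G(η²)|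 ≤ C_R·|η¹ − η²|. -/
/-!
For `‖η‖ ≤ R` the kernel `ψ(η - ζ y)` is bounded below by `m = ψ̃(R + sup ‖ζ‖) > 0`, since `ψ̃`
is nonincreasing, and above by `ψ̃(0) = 1`; with `∫ ρ₀ = 1` this gives `G ≥ m` and
`‖F‖ ≤ sup ‖w‖`. As `ψ` is `K`-Lipschitz, `G` is `K`-Lipschitz and `F` is `K sup ‖w‖`-Lipschitz,
and the quotient rule `G₁⁻¹F₁ - G₂⁻¹F₂ = G₁⁻¹(F₁ - F₂) + (G₁⁻¹ - G₂⁻¹)F₂` gives the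
Lipschitz constant `(m⁻¹ + m⁻²) K sup ‖w‖` for `F/G`.
-/

open MeasureTheory Real Set

lemma norm_inv_smul_sub_inv_smul_le {E : Type*} [NormedAddCommGroup E] [NormedSpace ℝ E]
    {G₁ G₂ m B : ℝ} {F₁ F₂ : E} (hm : 0 < m) (hG₁ : m ≤ G₁) (hG₂ : m ≤ G₂) (hF₂ : ‖F₂‖ ≤ B) :
    ‖G₁⁻¹ • F₁ - G₂⁻¹ • F₂‖ ≤ m⁻¹ * ‖F₁ - F₂‖ + m⁻¹ ^ 2 * B * |G₁ - G₂| := by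
  have hG₁0 : 0 < G₁ := hm.trans_le hG₁
  have hG₂0 : 0 < G₂ := hm.trans_le hG₂
  have hG₁inv : G₁⁻¹ ≤ m⁻¹ := inv_anti₀ hm hG₁
  have hG₂inv : G₂⁻¹ ≤ m⁻¹ := inv_anti₀ hm hG₂
  have hinv : |G₁⁻¹ - G₂⁻¹| ≤ m⁻¹ ^ 2 * |G₁ - G₂| := by
    rw [inv_sub_inv hG₁0.ne' hG₂0.ne', abs_div, abs_sub_comm, abs_of_pos (mul_pos hG₁0 hG₂0),
      div_eq_mul_inv, mul_inv, mul_comm]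
    gcongr
    calc G₁⁻¹ * G₂⁻¹ ≤ m⁻¹ * m⁻¹ := by gcongr
      _ = m⁻¹ ^ 2 := (sq _).symm
  calc ‖G₁⁻¹ • F₁ - G₂⁻¹ • F₂‖ = ‖G₁⁻¹ • (F₁ - F₂) + (G₁⁻¹ - G₂⁻¹) • F₂‖ := by
        rw [smul_sub, sub_smul, sub_add_sub_cancel]
    _ ≤ |G₁⁻¹| * ‖F₁ - F₂‖ + |G₁⁻¹ - G₂⁻¹| * ‖F₂‖ := by
        simpa only [norm_smul, Real.norm_eq_abs] using
          norm_add_le (G₁⁻¹ • (F₁ - F₂)) ((G₁⁻¹ - G₂⁻¹) • F₂)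
    _ ≤ m⁻¹ * ‖F₁ - F₂‖ + m⁻¹ ^ 2 * |G₁ - G₂| * B := by
        rw [abs_of_pos (inv_pos.2 hG₁0)]
        gcongr
    _ = m⁻¹ * ‖F₁ - F₂‖ + m⁻¹ ^ 2 * B * |G₁ - G₂| := by ring

section WeightedIntegral

variable {α E : Type*} [MeasurableSpace α] {μ : Measure α}
  [NormedAddCommGroup E] [NormedSpace ℝ E] {ρ : α → ℝ}

lemma MeasureTheory.Integrable.mul_smul_of_bounded (hρ : Integrable ρ μ) {f : α → ℝ}
    {w : α → E} {a b : ℝ} (hf : AEStronglyMeasurable f μ) (hw : AEStronglyMeasurable w μ)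
    (hfa : ∀ᵐ y ∂μ, ‖f y‖ ≤ a) (hwb : ∀ᵐ y ∂μ, ‖w y‖ ≤ b) :
    Integrable (fun y => (f y * ρ y) • w y) μ :=
  (hρ.bdd_mul hf hfa).smul_bdd b hw hwb

lemma norm_integral_mul_smul_le (hρ0 : ∀ᵐ y ∂μ, 0 ≤ ρ y) (hρ : Integrable ρ μ)
    (hρ1 : ∫ y, ρ y ∂μ = 1) {f : α → ℝ} {w : α → E} {a b : ℝ}
    (hfa : ∀ᵐ y ∂μ, ‖f y‖ ≤ a) (hwb : ∀ᵐ y ∂μ, ‖w y‖ ≤ b) :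
    ‖∫ y, (f y * ρ y) • w y ∂μ‖ ≤ a * b := by
  have hbound : ∀ᵐ y ∂μ, ‖(f y * ρ y) • w y‖ ≤ a * b * ρ y := by
    filter_upwards [hρ0, hfa, hwb] with y hρy hfy hwy
    rw [norm_smul, norm_mul, Real.norm_of_nonneg hρy]
    have ha : 0 ≤ a := (norm_nonneg _).trans hfy
    calc ‖f y‖ * ρ y * ‖w y‖ ≤ a * ρ y * b := by gcongr
      _ = a * b * ρ y := by ring
  calc ‖∫ y, (f y * ρ y) • w y ∂μ‖ ≤ ∫ y, a * b * ρ y ∂μ :=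
        norm_integral_le_of_norm_le (hρ.const_mul _) hbound
    _ = a * b := by rw [integral_const_mul, hρ1, mul_one]

lemma le_integral_mul_of_le (hρ0 : ∀ᵐ y ∂μ, 0 ≤ ρ y) (hρ : Integrable ρ μ)
    (hρ1 : ∫ y, ρ y ∂μ = 1) {k : α → ℝ} {m : ℝ} (hk : Integrable (fun y => k y * ρ y) μ)
    (hkm : ∀ᵐ y ∂μ, m ≤ k y) :
    m ≤ ∫ y, k y * ρ y ∂μ := by
  calc m = ∫ y, m * ρ y ∂μ := by rw [integral_const_mul, hρ1, mul_one]
    _ ≤ ∫ y, k y * ρ y ∂μ := integral_mono_ae (hρ.const_mul m) hk <| by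
        filter_upwards [hρ0, hkm] with y hρy hky
        exact mul_le_mul_of_nonneg_right hky hρy

lemma norm_integral_mul_smul_sub_le (hρ0 : ∀ᵐ y ∂μ, 0 ≤ ρ y) (hρ : Integrable ρ μ)
    (hρ1 : ∫ y, ρ y ∂μ = 1) {k₁ k₂ : α → ℝ} {w : α → E} {δ b : ℝ}
    (hk₁ : Integrable (fun y => (k₁ y * ρ y) • w y) μ)
    (hk₂ : Integrable (fun y => (k₂ y * ρ y) • w y) μ)
    (hδ : ∀ᵐ y ∂μ, |k₁ y - k₂ y| ≤ δ) (hwb : ∀ᵐ y ∂μ, ‖w y‖ ≤ b) :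
    ‖∫ y, (k₁ y * ρ y) • w y ∂μ - ∫ y, (k₂ y * ρ y) • w y ∂μ‖ ≤ δ * b := by
  rw [← integral_sub hk₁ hk₂]
  simp_rw [← sub_smul, ← sub_mul]
  exact norm_integral_mul_smul_le hρ0 hρ hρ1 (by simpa only [Real.norm_eq_abs] using hδ) hwb

theorem norm_inv_integral_mul_smul_sub_le (hρ0 : ∀ᵐ y ∂μ, 0 ≤ ρ y) (hρ : Integrable ρ μ)
    (hρ1 : ∫ y, ρ y ∂μ = 1) {k₁ k₂ : α → ℝ} {w : α → E} {m M B δ : ℝ} (hm : 0 < m)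
    (hk₁ : AEStronglyMeasurable k₁ μ) (hk₂ : AEStronglyMeasurable k₂ μ)
    (hw : AEStronglyMeasurable w μ) (hk₁m : ∀ᵐ y ∂μ, m ≤ k₁ y) (hk₂m : ∀ᵐ y ∂μ, m ≤ k₂ y)
    (hk₁M : ∀ᵐ y ∂μ, k₁ y ≤ M) (hk₂M : ∀ᵐ y ∂μ, k₂ y ≤ M) (hwB : ∀ᵐ y ∂μ, ‖w y‖ ≤ B)
    (hδ : ∀ᵐ y ∂μ, |k₁ y - k₂ y| ≤ δ) :
    ‖(∫ y, k₁ y * ρ y ∂μ)⁻¹ • ∫ y, (k₁ y * ρ y) • w y ∂μ -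
        (∫ y, k₂ y * ρ y ∂μ)⁻¹ • ∫ y, (k₂ y * ρ y) • w y ∂μ‖ ≤
      (m⁻¹ + m⁻¹ ^ 2 * M) * B * δ := by
  have norm_le {k : α → ℝ} (hkm : ∀ᵐ y ∂μ, m ≤ k y) (hkM : ∀ᵐ y ∂μ, k y ≤ M) :
      ∀ᵐ y ∂μ, ‖k y‖ ≤ M := by
    filter_upwards [hkm, hkM] with y hmy hMy
    rwa [Real.norm_of_nonneg (hm.le.trans hmy)]
  have hk₁' := norm_le hk₁m hk₁M
  have hk₂' := norm_le hk₂m hk₂M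
  have hone : ∀ᵐ _ ∂μ, ‖(1 : ℝ)‖ ≤ 1 := by simp
  have hG : |∫ y, k₁ y * ρ y ∂μ - ∫ y, k₂ y * ρ y ∂μ| ≤ δ := by
    simpa only [smul_eq_mul, mul_one, Real.norm_eq_abs] using
      norm_integral_mul_smul_sub_le hρ0 hρ hρ1
        (hρ.mul_smul_of_bounded hk₁ aestronglyMeasurable_const hk₁' hone)
        (hρ.mul_smul_of_bounded hk₂ aestronglyMeasurable_const hk₂' hone) hδ hone
  have hF := norm_integral_mul_smul_sub_le hρ0 hρ hρ1 (hρ.mul_smul_of_bounded hk₁ hw hk₁' hwB)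
    (hρ.mul_smul_of_bounded hk₂ hw hk₂' hwB) hδ hwB
  have hF₂ := norm_integral_mul_smul_le hρ0 hρ hρ1 hk₂' hwB
  have hG₁ := le_integral_mul_of_le hρ0 hρ hρ1 (hρ.bdd_mul hk₁ hk₁') hk₁m
  have hG₂ := le_integral_mul_of_le hρ0 hρ hρ1 (hρ.bdd_mul hk₂ hk₂') hk₂m
  calc _ ≤ m⁻¹ * (δ * B) + m⁻¹ ^ 2 * (M * B) * δ :=
        (norm_inv_smul_sub_inv_smul_le hm hG₁ hG₂ hF₂).trans <| by
          have : 0 ≤ M * B := (norm_nonneg _).trans hF₂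
          gcongr
    _ = (m⁻¹ + m⁻¹ ^ 2 * M) * B * δ := by ring

end WeightedIntegral

theorem stmt_7_general {d : ℕ} (Ω₀ : Set (EuclideanSpace ℝ (Fin d)))
    (hΩo : IsOpen Ω₀)
    (ρ₀ : EuclideanSpace ℝ (Fin d) → ℝ)
    (hρ_nonneg : ∀ y, 0 ≤ ρ₀ y) (hρ_int : IntegrableOn ρ₀ Ω₀)
    (hρ_one : ∫ y in Ω₀, ρ₀ y = 1)
    (ψ : EuclideanSpace ℝ (Fin d) → ℝ) (ψt : ℝ → ℝ)
    (hψ_rad : ∀ x, ψ x = ψt ‖x‖) (hψt_pos : ∀ r : ℝ, 0 ≤ r → 0 < ψt r)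
    (hψt_anti : AntitoneOn ψt (Set.Ici 0)) (hψt_one : ψt 0 = 1)
    (hψ_lip : ∃ K : NNReal, LipschitzWith K ψ)
    (ζ w : EuclideanSpace ℝ (Fin d) → EuclideanSpace ℝ (Fin d))
    (hζ_meas : Measurable ζ) (hw_meas : Measurable w)
    (hζ_bdd : ∃ Bζ : ℝ, ∀ y ∈ Ω₀, ‖ζ y‖ ≤ Bζ)
    (hw_bdd : ∃ Bw : ℝ, ∀ y ∈ Ω₀, ‖w y‖ ≤ Bw) :
    ∀ R : ℝ, 0 < R → ∃ C : ℝ, 0 < C ∧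
      ∀ η₁ η₂ : EuclideanSpace ℝ (Fin d), ‖η₁‖ ≤ R → ‖η₂‖ ≤ R →
        ‖(∫ y in Ω₀, ψ (η₁ - ζ y) * ρ₀ y)⁻¹ •
            (∫ y in Ω₀, (ψ (η₁ - ζ y) * ρ₀ y) • w y) -
          (∫ y in Ω₀, ψ (η₂ - ζ y) * ρ₀ y)⁻¹ •
            (∫ y in Ω₀, (ψ (η₂ - ζ y) * ρ₀ y) • w y)‖ ≤ C * ‖η₁ - η₂‖ := by
  obtain ⟨K, hK⟩ := hψ_lip
  obtain ⟨Bζ, hBζ⟩ := hζ_bdd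
  obtain ⟨Bw, hBw⟩ := hw_bdd
  intro R hR
  have hΩ := hΩo.measurableSet
  set m := ψt (R + max Bζ 0)
  have hm : 0 < m := hψt_pos _ (by positivity)
  have hψ_le_one (x) : ψ x ≤ 1 := by
    rw [hψ_rad, ← hψt_one]
    exact hψt_anti (mem_Ici.2 le_rfl) (mem_Ici.2 (norm_nonneg x)) (norm_nonneg x)
  have hψ_ge {η} (hη : ‖η‖ ≤ R) : ∀ᵐ y ∂volume.restrict Ω₀, m ≤ ψ (η - ζ y) := by
    refine ae_restrict_of_forall_mem hΩ fun y hy => ?_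
    rw [hψ_rad]
    refine hψt_anti (mem_Ici.2 (norm_nonneg _)) (mem_Ici.2 (by positivity)) ?_
    calc ‖η - ζ y‖ ≤ ‖η‖ + ‖ζ y‖ := norm_sub_le _ _
      _ ≤ R + max Bζ 0 := add_le_add hη ((hBζ y hy).trans (le_max_left _ _))
  have hψ_meas (η) : AEStronglyMeasurable (fun y => ψ (η - ζ y)) (volume.restrict Ω₀) :=
    (hK.continuous.measurable.comp (measurable_const.sub hζ_meas)).aestronglyMeasurable
  have hψ_sub (η₁ η₂ : EuclideanSpace ℝ (Fin d)) (y) :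
      |ψ (η₁ - ζ y) - ψ (η₂ - ζ y)| ≤ K * ‖η₁ - η₂‖ := by
    have := hK.dist_le_mul (η₁ - ζ y) (η₂ - ζ y)
    rwa [dist_sub_right, Real.dist_eq, dist_eq_norm] at this
  refine ⟨(m⁻¹ + m⁻¹ ^ 2 * 1) * max Bw 0 * K + 1, by positivity, fun η₁ η₂ hη₁ hη₂ => ?_⟩
  calc _ ≤ (m⁻¹ + m⁻¹ ^ 2 * 1) * max Bw 0 * (K * ‖η₁ - η₂‖) :=
        norm_inv_integral_mul_smul_sub_le (.of_forall hρ_nonneg) hρ_int hρ_one hm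
          (hψ_meas η₁) (hψ_meas η₂) hw_meas.aestronglyMeasurable (hψ_ge hη₁) (hψ_ge hη₂)
          (.of_forall fun _ => hψ_le_one _) (.of_forall fun _ => hψ_le_one _)
          (ae_restrict_of_forall_mem hΩ fun y hy => (hBw y hy).trans (le_max_left _ _))
          (.of_forall (hψ_sub η₁ η₂))
    _ ≤ ((m⁻¹ + m⁻¹ ^ 2 * 1) * max Bw 0 * K + 1) * ‖η₁ - η₂‖ := by
        rw [← mul_assoc]
        gcongr
        linarith

/-- **Local Lipschitz continuity of the normalized alignment force (Theorem 2.1, key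
estimate).** With `F(η) = ∫_{Ω₀} ψ(η - ζ(y)) w(y) ρ₀(y) dy` and
`G(η) = ∫_{Ω₀} ψ(η - ζ(y)) ρ₀(y) dy`, for every `R > 0` there is `C_R > 0` such that
`|F(η¹)/G(η¹) - F(η²)/G(η²)| ≤ C_R |η¹ - η²|` whenever `|η¹|, |η²| ≤ R`. -/
theorem stmt_7 {d : ℕ} (Ω₀ : Set (EuclideanSpace ℝ (Fin d)))
    (hΩo : IsOpen Ω₀) (hΩne : Ω₀.Nonempty) (hΩb : Bornology.IsBounded Ω₀)
    (ρ₀ : EuclideanSpace ℝ (Fin d) → ℝ) (hρ_meas : Measurable ρ₀)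
    (hρ_nonneg : ∀ y, 0 ≤ ρ₀ y) (hρ_int : IntegrableOn ρ₀ Ω₀)
    (hρ_one : ∫ y in Ω₀, ρ₀ y = 1)
    (ψ : EuclideanSpace ℝ (Fin d) → ℝ) (ψt : ℝ → ℝ)
    (hψ_rad : ∀ x, ψ x = ψt ‖x‖) (hψt_pos : ∀ r : ℝ, 0 ≤ r → 0 < ψt r)
    (hψt_anti : AntitoneOn ψt (Set.Ici 0)) (hψt_one : ψt 0 = 1)
    (hψ_lip : ∃ K : NNReal, LipschitzWith K ψ)
    (ζ w : EuclideanSpace ℝ (Fin d) → EuclideanSpace ℝ (Fin d))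
    (hζ_meas : Measurable ζ) (hw_meas : Measurable w)
    (hζ_bdd : ∃ Bζ : ℝ, ∀ y ∈ Ω₀, ‖ζ y‖ ≤ Bζ)
    (hw_bdd : ∃ Bw : ℝ, ∀ y ∈ Ω₀, ‖w y‖ ≤ Bw) :
    ∀ R : ℝ, 0 < R → ∃ C : ℝ, 0 < C ∧
      ∀ η₁ η₂ : EuclideanSpace ℝ (Fin d), ‖η₁‖ ≤ R → ‖η₂‖ ≤ R →
        ‖(∫ y in Ω₀, ψ (η₁ - ζ y) * ρ₀ y)⁻¹ •
            (∫ y in Ω₀, (ψ (η₁ - ζ y) * ρ₀ y) • w y) -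
          (∫ y in Ω₀, ψ (η₂ - ζ y) * ρ₀ y)⁻¹ •
            (∫ y in Ω₀, (ψ (η₂ - ζ y) * ρ₀ y) • w y)‖ ≤ C * ‖η₁ - η₂‖ :=
  stmt_7_general Ω₀ hΩo ρ₀ hρ_nonneg hρ_int hρ_one ψ ψt hψ_rad hψt_pos hψt_anti hψt_one hψ_lip ζ w
    hζ_meas hw_meas hζ_bdd hw_bdd
end

section
/- Let C̄ > 0 and define w⁻ := (−1 − √(1 + 4·C̄))/2. Let T ∈ (0,∞] and let w : [0,T) → ℝ be differentiable with w'(t) ≤ −(w(t)² + w(t) − C̄) for all t ∈ [0,T), and suppose w(0) < w⁻. Then w(t) ≤ (t + 1/(w(0) − w⁻))^{−1} + w⁻ for all t ∈ [0,T); in particular w cannot be defined beyond time 1/(w⁻ − w(0)), i.e. T ≤ 1/(w⁻ − w(0)). -/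
/-!
Below the smaller root `w⁻` of `x² + x - C̄` one has `x² + x - C̄ ≥ (x - w⁻)²`, so the gap
`u := w⁻ - w` satisfies the Riccati inequality `u' ≥ u²`. Hence `u` stays positive, and `1/u`
decreases at rate at least `1`; since `1/u > 0`, the solution cannot survive past `1/u(0)`.
-/

open Set

namespace Riccati

variable {u u' : ℝ → ℝ} {a b : ℝ}

theorem pos_of_sq_le_deriv (hu : ∀ r ∈ Icc a b, HasDerivAt u (u' r) r) (ha : 0 < u a)
    (hineq : ∀ r ∈ Icc a b, 0 < u r → u r ^ 2 ≤ u' r) : ∀ r ∈ Icc a b, 0 < u r := by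
  -- `u` cannot cross the level `u a / 2`, where `u' ≥ u² > 0`.
  have hhalf : ∀ r ∈ Icc a b, u a / 2 ≤ u r :=
    image_le_of_deriv_right_lt_deriv_boundary' continuousOn_const
      (fun _ _ => hasDerivWithinAt_const _ _ _) (by linarith)
      (fun r hr => (hu r hr).continuousAt.continuousWithinAt)
      (fun r hr => (hu r (Ico_subset_Icc_self hr)).hasDerivWithinAt)
      (fun r hr hr_eq => by
        have hpos : 0 < u r := by linarith
        nlinarith [hineq r (Ico_subset_Icc_self hr) hpos])
  exact fun r hr => by linarith [hhalf r hr]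

theorem inv_le_inv_sub_of_sq_le_deriv (hu : ∀ r ∈ Icc a b, HasDerivAt u (u' r) r)
    (ha : 0 < u a) (hineq : ∀ r ∈ Icc a b, 0 < u r → u r ^ 2 ≤ u' r) :
    ∀ r ∈ Icc a b, (u r)⁻¹ ≤ (u a)⁻¹ - (r - a) := by
  have hpos := pos_of_sq_le_deriv hu ha hineq
  have hinv : ∀ r ∈ Icc a b, HasDerivAt (fun x => (u x)⁻¹) (-u' r / u r ^ 2) r :=
    fun r hr => (hu r hr).inv (hpos r hr).ne'
  have hline : ∀ r, HasDerivAt (fun x => (u a)⁻¹ - (x - a)) (-1) r := fun r => by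
    simpa using ((hasDerivAt_id r).sub_const a).const_sub (u a)⁻¹
  refine image_le_of_deriv_right_le_deriv_boundary
    (fun r hr => (hinv r hr).continuousAt.continuousWithinAt)
    (fun r hr => (hinv r (Ico_subset_Icc_self hr)).hasDerivWithinAt) (by simp)
    (fun r _ => (hline r).continuousAt.continuousWithinAt)
    (fun r _ => (hline r).hasDerivWithinAt) (fun r hr => ?_)
  have hr := Ico_subset_Icc_self hr
  have hsq : 0 < u r ^ 2 := pow_pos (hpos r hr) 2
  rw [div_le_iff₀ hsq]
  linarith [hineq r hr (hpos r hr)]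

end Riccati

theorem sq_sub_le_of_le_root {C m x : ℝ} (hm : m ^ 2 + m = C) (hm' : m ≤ -1 / 2)
    (hx : x ≤ m) : (x - m) ^ 2 ≤ x ^ 2 + x - C := by
  -- the difference of the two sides is `(1 + 2m) (x - m)`
  nlinarith [mul_nonneg_of_nonpos_of_nonpos (by linarith : 1 + 2 * m ≤ 0) (sub_nonpos.2 hx)]

theorem sub_pos_and_inv_le_of_deriv_le_neg_quadratic {C m t : ℝ} {w w' : ℝ → ℝ}
    (hm : m ^ 2 + m = C) (hm' : m ≤ -1 / 2) (ht : 0 ≤ t)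
    (hw : ∀ r ∈ Icc 0 t, HasDerivAt w (w' r) r)
    (hineq : ∀ r ∈ Icc 0 t, w' r ≤ -(w r ^ 2 + w r - C)) (h0 : w 0 < m) :
    0 < m - w t ∧ (m - w t)⁻¹ ≤ (m - w 0)⁻¹ - t := by
  have hu : ∀ r ∈ Icc 0 t, HasDerivAt (fun x => m - w x) (-w' r) r :=
    fun r hr => (hw r hr).const_sub m
  have hu0 : 0 < m - w 0 := by linarith
  have hric : ∀ r ∈ Icc 0 t, 0 < m - w r → (m - w r) ^ 2 ≤ -w' r := fun r hr hpos => by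
    linarith [hineq r hr, sq_sub_le_of_le_root hm hm' (by linarith : w r ≤ m)]
  have htmem : t ∈ Icc 0 t := right_mem_Icc.2 ht
  refine ⟨Riccati.pos_of_sq_le_deriv hu hu0 hric t htmem, ?_⟩
  simpa using Riccati.inv_le_inv_sub_of_sq_le_deriv hu hu0 hric t htmem

theorem stmt_17_general (Cb : ℝ) (hC : 0 < Cb) (T : EReal)
    (w w' : ℝ → ℝ)
    (hw : ∀ t : ℝ, 0 ≤ t → (t : EReal) < T → HasDerivAt w (w' t) t)
    (hineq : ∀ t : ℝ, 0 ≤ t → (t : EReal) < T → w' t ≤ -(w t ^ 2 + w t - Cb))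
    (h0 : w 0 < (-1 - Real.sqrt (1 + 4 * Cb)) / 2) :
    (∀ t : ℝ, 0 ≤ t → (t : EReal) < T →
      w t ≤ (t + 1 / (w 0 - (-1 - Real.sqrt (1 + 4 * Cb)) / 2))⁻¹ +
        (-1 - Real.sqrt (1 + 4 * Cb)) / 2) ∧
    T ≤ ((1 / ((-1 - Real.sqrt (1 + 4 * Cb)) / 2 - w 0) : ℝ) : EReal) := by
  set m := (-1 - Real.sqrt (1 + 4 * Cb)) / 2
  have hroot : m ^ 2 + m = Cb := by
    have := Real.sq_sqrt (by linarith : (0 : ℝ) ≤ 1 + 4 * Cb)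
    simp only [m]; linear_combination this / 4
  have hm : m ≤ -1 / 2 := by
    have := Real.sqrt_nonneg (1 + 4 * Cb)
    simp only [m]; linarith
  have key : ∀ t : ℝ, 0 ≤ t → (t : EReal) < T →
      0 < m - w t ∧ (m - w t)⁻¹ ≤ (m - w 0)⁻¹ - t := fun t ht htT => by
    have hlt : ∀ r ∈ Icc 0 t, (r : EReal) < T :=
      fun r hr => (EReal.coe_le_coe_iff.2 hr.2).trans_lt htT
    exact sub_pos_and_inv_le_of_deriv_le_neg_quadratic hroot hm ht
      (fun r hr => hw r hr.1 (hlt r hr)) (fun r hr => hineq r hr.1 (hlt r hr)) h0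
  refine ⟨fun t ht htT => ?_, ?_⟩
  · obtain ⟨hpos, hle⟩ := key t ht htT
    have hgap : ((m - w 0)⁻¹ - t)⁻¹ ≤ m - w t := by
      simpa using inv_anti₀ (inv_pos.2 hpos) hle
    have hrw : t + 1 / (w 0 - m) = -((m - w 0)⁻¹ - t) := by
      rw [one_div, ← neg_sub, inv_neg]; ring
    rw [hrw, inv_neg]
    linarith
  · have hu0 : 0 < m - w 0 := by linarith
    by_contra! hT
    obtain ⟨hpos, hle⟩ := key _ (by positivity) hT
    rw [one_div] at hpos hle
    rw [sub_self] at hle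
    exact (inv_pos.2 hpos).not_ge hle

/-- **Supercritical case of Theorem 2.5.** If `w'(t) ≤ -(w(t)² + w(t) - C̄)` on `[0,T)`
and `w(0) < w⁻ := (-1 - √(1 + 4C̄))/2`, then
`w(t) ≤ (t + 1/(w(0) - w⁻))⁻¹ + w⁻` on `[0,T)`, and `w` cannot be defined beyond time
`1/(w⁻ - w(0))`, i.e. `T ≤ 1/(w⁻ - w(0))`. -/
theorem stmt_17 (Cb : ℝ) (hC : 0 < Cb) (T : EReal) (hT : 0 < T)
    (w w' : ℝ → ℝ)
    (hw : ∀ t : ℝ, 0 ≤ t → (t : EReal) < T → HasDerivAt w (w' t) t)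
    (hineq : ∀ t : ℝ, 0 ≤ t → (t : EReal) < T → w' t ≤ -(w t ^ 2 + w t - Cb))
    (h0 : w 0 < (-1 - Real.sqrt (1 + 4 * Cb)) / 2) :
    (∀ t : ℝ, 0 ≤ t → (t : EReal) < T →
      w t ≤ (t + 1 / (w 0 - (-1 - Real.sqrt (1 + 4 * Cb)) / 2))⁻¹ +
        (-1 - Real.sqrt (1 + 4 * Cb)) / 2) ∧
    T ≤ ((1 / ((-1 - Real.sqrt (1 + 4 * Cb)) / 2 - w 0) : ℝ) : EReal) :=
  stmt_17_general Cb hC T w w' hw hineq h0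
end

section
/- Let C > 0 and R > 0. Let ψ : ℝ → (0,∞) be continuously differentiable with |ψ'(x)| ≤ C·ψ(x) for all x ∈ ℝ, let ρ : ℝ → [0,∞) be integrable with ∫_ℝ ρ(y) dy = 1, and let u : ℝ → ℝ be measurable with |u(y)| ≤ R for all y ∈ ℝ. Assume all the integrals below are well defined. Then the function x ↦ (∫_ℝ ψ(x−y)·u(y)·ρ(y) dy) / (∫_ℝ ψ(x−y)·ρ(y) dy) is differentiable on ℝ and its derivative is bounded in absolute value by 2·C·R at every point. -/
/-!
Since `|(log ψ)'| = |ψ'| / ψ ≤ C`, the kernel satisfies `ψ (z - y) ≤ e ^ C ψ (x - y)` for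
`|z - x| < 1`, which dominates the `z`-derivative of both integrands by an integrable function of
`y`; hence both integrals can be differentiated under the integral sign. Writing `a` and `g` for the
numerator and the denominator, the integrands of `a`, `a'` and `g'` are bounded by `R`, `C R` and `C`
times that of `g`, so `|a| ≤ R g`, `|a'| ≤ C R g`, `|g'| ≤ C g` and the quotient rule gives `|(a' g - a g') / g²| ≤ 2 C R`.
-/

open MeasureTheory Real

lemma nonneg_of_abs_deriv_le_mul {ψ : ℝ → ℝ} {C : ℝ} (hψ_pos : ∀ x, 0 < ψ x)
    (hψ' : ∀ x, |deriv ψ x| ≤ C * ψ x) : 0 ≤ C :=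
  nonneg_of_mul_nonneg_left ((abs_nonneg _).trans (hψ' 0)) (hψ_pos 0)

lemma lipschitzWith_log_of_abs_deriv_le {ψ : ℝ → ℝ} {C : ℝ} (hψ_pos : ∀ x, 0 < ψ x)
    (hψ_diff : Differentiable ℝ ψ) (hψ' : ∀ x, |deriv ψ x| ≤ C * ψ x) :
    LipschitzWith C.toNNReal (fun x => log (ψ x)) := by
  have hlog : ∀ x, HasDerivAt (fun x => log (ψ x)) (deriv ψ x / ψ x) x := fun x =>
    (hψ_diff x).hasDerivAt.log (hψ_pos x).ne'
  refine lipschitzWith_of_nnnorm_deriv_le (fun x => (hlog x).differentiableAt) fun x => ?_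
  rw [(hlog x).deriv, ← NNReal.coe_le_coe, coe_nnnorm, norm_eq_abs,
    coe_toNNReal _ (nonneg_of_abs_deriv_le_mul hψ_pos hψ'), abs_div, abs_of_pos (hψ_pos x),
    div_le_iff₀ (hψ_pos x)]
  exact hψ' x

lemma le_exp_mul_of_abs_deriv_le {ψ : ℝ → ℝ} {C : ℝ} (hψ_pos : ∀ x, 0 < ψ x)
    (hψ_diff : Differentiable ℝ ψ) (hψ' : ∀ x, |deriv ψ x| ≤ C * ψ x) (a b : ℝ) :
    ψ a ≤ exp (C * |a - b|) * ψ b := by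
  have hlip := (lipschitzWith_log_of_abs_deriv_le hψ_pos hψ_diff hψ').dist_le_mul a b
  rw [dist_eq, dist_eq, coe_toNNReal _ (nonneg_of_abs_deriv_le_mul hψ_pos hψ')] at hlip
  have hlog : log (ψ a) ≤ C * |a - b| + log (ψ b) := by linarith [(abs_le.mp hlip).2]
  calc ψ a = exp (log (ψ a)) := (exp_log (hψ_pos a)).symm
    _ ≤ exp (C * |a - b| + log (ψ b)) := exp_le_exp.mpr hlog
    _ = exp (C * |a - b|) * ψ b := by rw [exp_add, exp_log (hψ_pos b)]

lemma norm_deriv_comp_sub_mul_le_of_mem_ball {ψ : ℝ → ℝ} {C : ℝ} (hψ_pos : ∀ x, 0 < ψ x)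
    (hψ_diff : Differentiable ℝ ψ) (hψ' : ∀ x, |deriv ψ x| ≤ C * ψ x) (g : ℝ → ℝ)
    {x z : ℝ} (hz : z ∈ Metric.ball x 1) (y : ℝ) :
    ‖deriv ψ (z - y) * g y‖ ≤ C * exp C * ‖ψ (x - y) * g y‖ := by
  have hC := nonneg_of_abs_deriv_le_mul hψ_pos hψ'
  have hψ_near : ψ (z - y) ≤ exp C * ψ (x - y) := by
    refine (le_exp_mul_of_abs_deriv_le hψ_pos hψ_diff hψ' (z - y) (x - y)).trans ?_
    refine mul_le_mul_of_nonneg_right (exp_le_exp.mpr ?_) (hψ_pos _).le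
    rw [sub_sub_sub_cancel_right, ← dist_eq]
    exact mul_le_of_le_one_right hC (Metric.mem_ball.mp hz).le
  rw [norm_mul, norm_mul, norm_eq_abs, norm_of_nonneg (hψ_pos _).le]
  calc |deriv ψ (z - y)| * ‖g y‖ ≤ C * ψ (z - y) * ‖g y‖ := by gcongr; exact hψ' _
    _ ≤ C * (exp C * ψ (x - y)) * ‖g y‖ := by gcongr
    _ = C * exp C * (ψ (x - y) * ‖g y‖) := by ring

lemma hasDerivAt_integral_comp_sub_mul {ψ : ℝ → ℝ} {C : ℝ} (hψ_pos : ∀ x, 0 < ψ x)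
    (hψ_diff : Differentiable ℝ ψ) (hψ' : ∀ x, |deriv ψ x| ≤ C * ψ x) {g : ℝ → ℝ}
    (hint : ∀ x, Integrable (fun y => ψ (x - y) * g y))
    {x : ℝ} (hint' : Integrable (fun y => deriv ψ (x - y) * g y)) :
    HasDerivAt (fun z => ∫ y, ψ (z - y) * g y) (∫ y, deriv ψ (x - y) * g y) x := by
  refine (hasDerivAt_integral_of_dominated_loc_of_deriv_le (Metric.ball_mem_nhds x one_pos)
    (Filter.Eventually.of_forall fun z => (hint z).aestronglyMeasurable) (hint x)
    hint'.aestronglyMeasurable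
    (Filter.Eventually.of_forall fun y z hz =>
      norm_deriv_comp_sub_mul_le_of_mem_ball hψ_pos hψ_diff hψ' g hz y)
    ((hint x).norm.const_mul (C * exp C))
    (Filter.Eventually.of_forall fun y z _ => ?_)).2
  exact (hψ_diff (z - y)).hasDerivAt.comp_sub_const z y |>.mul_const (g y)

lemma integral_mul_pos_of_pos {f g : ℝ → ℝ} (hf : ∀ y, 0 < f y) (hg : 0 ≤ g)
    (hfg : Integrable (fun y => f y * g y)) (hg_pos : 0 < ∫ y, g y) :
    0 < ∫ y, f y * g y := by
  have hg_int : Integrable g := Integrable.of_integral_ne_zero hg_pos.ne'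
  have hsupp : (Function.support fun y => f y * g y) = Function.support g := by
    ext y
    simp [(hf y).ne']
  rw [integral_pos_iff_support_of_nonneg (fun y => mul_nonneg (hf y).le (hg y)) hfg, hsupp]
  exact (integral_pos_iff_support_of_nonneg hg hg_int).mp hg_pos

lemma abs_integral_le_mul_integral {f h : ℝ → ℝ} {K : ℝ} (hh : Integrable h)
    (hfh : ∀ y, |f y| ≤ K * h y) : |∫ y, f y| ≤ K * ∫ y, h y := by
  rw [← integral_const_mul]
  exact norm_integral_le_of_norm_le (hh.const_mul K) (ae_of_all _ fun y => (norm_eq_abs (f y)).trans_le (hfh y))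

lemma abs_quotient_rule_le {a a' g g' C R : ℝ} (hg : 0 < g) (ha : |a| ≤ R * g)
    (ha' : |a'| ≤ C * R * g) (hg' : |g'| ≤ C * g) :
    |(a' * g - a * g') / g ^ 2| ≤ 2 * C * R := by
  have hRg : 0 ≤ R * g := (abs_nonneg a).trans ha
  rw [abs_div, abs_of_pos (pow_pos hg 2), div_le_iff₀ (pow_pos hg 2)]
  calc |a' * g - a * g'| ≤ |a'| * g + |a| * |g'| := by
        simpa only [abs_mul, abs_of_pos hg] using abs_sub (a' * g) (a * g')
    _ ≤ C * R * g * g + R * g * (C * g) := by gcongr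
    _ = 2 * C * R * g ^ 2 := by ring

theorem stmt_18_general (C R : ℝ)
    (ψ : ℝ → ℝ) (hψ_pos : ∀ x, 0 < ψ x)
    (hψ_diff : Differentiable ℝ ψ)
    (hψ' : ∀ x, |deriv ψ x| ≤ C * ψ x)
    (ρ : ℝ → ℝ) (hρ_nonneg : ∀ y, 0 ≤ ρ y)
    (hρ_one : ∫ y, ρ y = 1)
    (u : ℝ → ℝ) (hu_bdd : ∀ y, |u y| ≤ R)
    (hint1 : ∀ x : ℝ, Integrable (fun y => ψ (x - y) * u y * ρ y))
    (hint2 : ∀ x : ℝ, Integrable (fun y => ψ (x - y) * ρ y))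
    (hint3 : ∀ x : ℝ, Integrable (fun y => deriv ψ (x - y) * u y * ρ y))
    (hint4 : ∀ x : ℝ, Integrable (fun y => deriv ψ (x - y) * ρ y)) :
    ∀ x : ℝ, ∃ D : ℝ,
      HasDerivAt (fun z => (∫ y, ψ (z - y) * u y * ρ y) / (∫ y, ψ (z - y) * ρ y)) D x ∧
      |D| ≤ 2 * C * R := by
  intro x
  have hden : 0 < ∫ y, ψ (x - y) * ρ y :=
    integral_mul_pos_of_pos (fun y => hψ_pos (x - y)) hρ_nonneg (hint2 x) (hρ_one ▸ one_pos)
  have hnum : HasDerivAt (fun z => ∫ y, ψ (z - y) * u y * ρ y)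
      (∫ y, deriv ψ (x - y) * u y * ρ y) x := by
    simpa only [mul_assoc] using hasDerivAt_integral_comp_sub_mul hψ_pos hψ_diff hψ'
      (fun z => by simpa only [mul_assoc] using hint1 z) (by simpa only [mul_assoc] using hint3 x)
  have hw : ∀ y, 0 ≤ ψ (x - y) * ρ y := fun y => mul_nonneg (hψ_pos _).le (hρ_nonneg y)
  have hu_ψρ : ∀ y, |ψ (x - y) * u y * ρ y| ≤ R * (ψ (x - y) * ρ y) := fun y => by
    rw [mul_right_comm, abs_mul, abs_of_nonneg (hw y), mul_comm]
    exact mul_le_mul_of_nonneg_right (hu_bdd y) (hw y)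
  have hψ'ρ : ∀ y, |deriv ψ (x - y) * ρ y| ≤ C * (ψ (x - y) * ρ y) := fun y => by
    rw [abs_mul, abs_of_nonneg (hρ_nonneg y), ← mul_assoc]
    exact mul_le_mul_of_nonneg_right (hψ' _) (hρ_nonneg y)
  have hψ'uρ : ∀ y, |deriv ψ (x - y) * u y * ρ y| ≤ C * R * (ψ (x - y) * ρ y) := fun y => by
    rw [mul_right_comm, abs_mul, mul_right_comm C]
    exact mul_le_mul (hψ'ρ y) (hu_bdd y) (abs_nonneg _)
      (mul_nonneg (nonneg_of_abs_deriv_le_mul hψ_pos hψ') (hw y))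
  exact ⟨_, hnum.div (hasDerivAt_integral_comp_sub_mul hψ_pos hψ_diff hψ' hint2 (hint4 x))
    hden.ne', abs_quotient_rule_le hden (abs_integral_le_mul_integral (hint2 x) hu_ψρ)
    (abs_integral_le_mul_integral (hint2 x) hψ'uρ) (abs_integral_le_mul_integral (hint2 x) hψ'ρ)⟩

/-- **Uniform derivative bound for the normalized alignment force (Theorem 2.5).**
If `|ψ'| ≤ C ψ` with `ψ > 0`, `ρ ≥ 0` with `∫ ρ = 1`, and `|u| ≤ R`, then
`x ↦ (∫ ψ(x-y) u(y) ρ(y) dy) / (∫ ψ(x-y) ρ(y) dy)` is differentiable with derivative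
bounded in absolute value by `2 C R` everywhere. -/
theorem stmt_18 (C R : ℝ) (hC : 0 < C) (hR : 0 < R)
    (ψ : ℝ → ℝ) (hψ_pos : ∀ x, 0 < ψ x)
    (hψ_diff : Differentiable ℝ ψ) (hψ'_cont : Continuous (deriv ψ))
    (hψ' : ∀ x, |deriv ψ x| ≤ C * ψ x)
    (ρ : ℝ → ℝ) (hρ_nonneg : ∀ y, 0 ≤ ρ y) (hρ_int : Integrable ρ)
    (hρ_one : ∫ y, ρ y = 1)
    (u : ℝ → ℝ) (hu_meas : Measurable u) (hu_bdd : ∀ y, |u y| ≤ R)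
    (hint1 : ∀ x : ℝ, Integrable (fun y => ψ (x - y) * u y * ρ y))
    (hint2 : ∀ x : ℝ, Integrable (fun y => ψ (x - y) * ρ y))
    (hint3 : ∀ x : ℝ, Integrable (fun y => deriv ψ (x - y) * u y * ρ y))
    (hint4 : ∀ x : ℝ, Integrable (fun y => deriv ψ (x - y) * ρ y)) :
    ∀ x : ℝ, ∃ D : ℝ,
      HasDerivAt (fun z => (∫ y, ψ (z - y) * u y * ρ y) / (∫ y, ψ (z - y) * ρ y)) D x ∧
      |D| ≤ 2 * C * R :=
  stmt_18_general C R ψ hψ_pos hψ_diff hψ' ρ hρ_nonneg hρ_one u hu_bdd hint1 hint2 hint3 hint4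
end
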